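/- arXiv:2601.15215 — 5 statements merged into one kernel-verified Lean document; each statement's English description precedes it below -/
import Mathlib

section
/- Let π be a partition of [k] and let B, B' be two distinct blocks of π. Then exactly one of the following holds: (i) B and B' are crossing (there exist i < i' < j < j' with i, j ∈ B and i', j' ∈ B'), (ii) B and B' are separated (there exists j such that one block lies entirely in {1,...,j} and the other in {j+1,...,k}), (iii) B is nested inside B', or (iv) B' is nested inside B. -/
/-- One-sided crossing: there exist `i < i' < j < j'` with `i, j ∈ B` and `i', j' ∈ B'`. -/
def CrossingOne {k : ℕ} (B B' : Set (Fin k)) : Prop :=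
  ∃ i i' j j' : Fin k, i < i' ∧ i' < j ∧ j < j' ∧ i ∈ B ∧ j ∈ B ∧ i' ∈ B' ∧ j' ∈ B'

/-- `B` and `B'` are crossing. -/
def Crossing {k : ℕ} (B B' : Set (Fin k)) : Prop :=
  CrossingOne B B' ∨ CrossingOne B' B

/-- `B'` is nested inside `B`. -/
def NestedIn {k : ℕ} (B' B : Set (Fin k)) : Prop :=
  ∃ i ∈ B, ∃ j ∈ B, i < j ∧ (∀ x ∈ B, ¬ (i < x ∧ x < j)) ∧ (∀ x ∈ B', i < x ∧ x < j)

/-- `B` and `B'` are separated. -/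
def Separated {k : ℕ} (B B' : Set (Fin k)) : Prop :=
  (∃ j : Fin k, (∀ x ∈ B, x ≤ j) ∧ (∀ y ∈ B', j < y)) ∨
  (∃ j : Fin k, (∀ x ∈ B', x ≤ j) ∧ (∀ y ∈ B, j < y))

section aux

variable {k : ℕ}

lemma exists_min' (S : Set (Fin k)) (h : S.Nonempty) : ∃ m ∈ S, ∀ x ∈ S, m ≤ x := by
  obtain ⟨a, ha, hmin⟩ := Set.exists_min_image S id (Set.toFinite S) h
  exact ⟨a, ha, hmin⟩

lemma exists_max' (S : Set (Fin k)) (h : S.Nonempty) : ∃ m ∈ S, ∀ x ∈ S, x ≤ m := by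
  obtain ⟨a, ha, hmax⟩ := Set.exists_max_image S id (Set.toFinite S) h
  exact ⟨a, ha, hmax⟩

lemma half_lemma (B B' : Set (Fin k)) (hdisj : ∀ x, x ∈ B → x ∈ B' → False)
    (hB'ne : B'.Nonempty) (hnc : ¬ CrossingOne B B')
    (m M : Fin k) (hm : m ∈ B) (hM : M ∈ B)
    (hmle : ∀ y ∈ B', m ≤ y) (hMmax : ∀ x ∈ B, x ≤ M) :
    (∀ y ∈ B', M < y) ∨ NestedIn B' B := by
  by_cases hsep : ∀ y ∈ B', M < y
  · exact Or.inl hsep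
  push_neg at hsep
  obtain ⟨y0, hy0, hy0M⟩ := hsep
  obtain ⟨y1, hy1, hy1min⟩ := exists_min' B' hB'ne
  obtain ⟨y2, hy2, hy2max⟩ := exists_max' B' hB'ne
  have hmlt : ∀ y ∈ B', m < y := by
    intro y hy
    refine lt_of_le_of_ne (hmle y hy) (fun h => hdisj m hm ?_)
    rw [h]; exact hy
  have hMgt : ∀ y ∈ B', y < M := by
    intro y' hy'
    by_contra h
    push_neg at h
    have hMy' : M < y' := by
      refine lt_of_le_of_ne h (fun he => hdisj M hM ?_)
      rw [he]; exact hy'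
    have hy0lt : y0 < M := by
      refine lt_of_le_of_ne hy0M (fun he => hdisj M hM ?_)
      rw [← he]; exact hy0
    exact hnc ⟨m, y0, M, y', hmlt y0 hy0, hy0lt, hMy', hm, hM, hy0, hy'⟩
  have hnomid : ∀ x ∈ B, ¬ (y1 < x ∧ x < y2) := by
    rintro x hx ⟨h1, h2⟩
    exact hnc ⟨m, y1, x, y2, hmlt y1 hy1, h1, h2, hm, hx, hy1, hy2⟩
  obtain ⟨i, ⟨hiB, hilt⟩, himax⟩ :=
    exists_max' {x | x ∈ B ∧ x < y1} ⟨m, hm, hmlt y1 hy1⟩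
  obtain ⟨j, ⟨hjB, hjgt⟩, hjmin⟩ :=
    exists_min' {x | x ∈ B ∧ y2 < x} ⟨M, hM, hMgt y2 hy2⟩
  refine Or.inr ⟨i, hiB, j, hjB,
    lt_trans hilt (lt_of_le_of_lt (hy1min y2 hy2) hjgt), ?_, ?_⟩
  · rintro x hx ⟨hix, hxj⟩
    rcases lt_or_ge x y1 with h | h
    · exact absurd (himax x ⟨hx, h⟩) (not_le_of_gt hix)
    rcases lt_or_ge y2 x with h' | h'
    · exact absurd (hjmin x ⟨hx, h'⟩) (not_le_of_gt hxj)
    have h1 : y1 < x := by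
      refine lt_of_le_of_ne h (fun he => hdisj x hx ?_)
      rw [← he]; exact hy1
    have h2 : x < y2 := by
      refine lt_of_lt_of_le (lt_of_le_of_ne h' ?_) le_rfl
      exact fun he => hdisj x hx (by rw [he]; exact hy2)
    exact hnomid x hx ⟨h1, h2⟩
  · intro y hy
    exact ⟨lt_of_lt_of_le hilt (hy1min y hy), lt_of_le_of_lt (hy2max y hy) hjgt⟩

lemma crossing_not_separated (B B' : Set (Fin k)) (h : Crossing B B') :
    ¬ Separated B B' := by
  have h1 : ∃ a ∈ B, ∃ b ∈ B', a < b := by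
    rcases h with ⟨i, i', j, j', l1, l2, l3, mi, mj, mi', mj'⟩ |
      ⟨i, i', j, j', l1, l2, l3, mi, mj, mi', mj'⟩
    · exact ⟨i, mi, i', mi', l1⟩
    · exact ⟨i', mi', j, mj, l2⟩
  have h2 : ∃ a ∈ B', ∃ b ∈ B, a < b := by
    rcases h with ⟨i, i', j, j', l1, l2, l3, mi, mj, mi', mj'⟩ |
      ⟨i, i', j, j', l1, l2, l3, mi, mj, mi', mj'⟩
    · exact ⟨i', mi', j, mj, l2⟩
    · exact ⟨i, mi, i', mi', l1⟩
  rintro (⟨j0, hle, hgt⟩ | ⟨j0, hle, hgt⟩)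
  · obtain ⟨a, ha, b, hb, hab⟩ := h2
    exact absurd hab (lt_asymm ((hle b hb).trans_lt (hgt a ha)))
  · obtain ⟨a, ha, b, hb, hab⟩ := h1
    exact absurd hab (lt_asymm ((hle b hb).trans_lt (hgt a ha)))

lemma crossing_not_nested (B B' : Set (Fin k)) (h : Crossing B B') :
    ¬ NestedIn B B' := by
  rintro ⟨a, haB', b, hbB', hab, hgap, hall⟩
  rcases h with ⟨i, i', j, j', l1, l2, l3, mi, mj, mi', mj'⟩ |
    ⟨i, i', j, j', l1, l2, l3, mi, mj, mi', mj'⟩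
  · -- i, j ∈ B, i', j' ∈ B', and a < i < i' < j < b
    exact hgap i' mi' ⟨(hall i mi).1.trans l1, l2.trans (hall j mj).2⟩
  · -- i, j ∈ B', i', j' ∈ B
    exact hgap j mj ⟨(hall i' mi').1.trans l2, l3.trans (hall j' mj').2⟩

lemma separated_not_nested (B B' : Set (Fin k)) (hBne : B.Nonempty)
    (hs : Separated B B') : ¬ NestedIn B B' := by
  rintro ⟨a, haB', b, hbB', hab, hgap, hall⟩
  obtain ⟨x0, hx0⟩ := hBne
  rcases hs with ⟨j0, hle, hgt⟩ | ⟨j0, hle, hgt⟩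
  · -- B ≤ j0 < B' ; but a ∈ B' and a < x0 ∈ B
    exact absurd ((hgt a haB').trans (hall x0 hx0).1) (not_lt_of_ge (hle x0 hx0))
  · -- B' ≤ j0 < B ; but x0 < b ∈ B' and b ≤ j0 < x0
    exact absurd ((hle b hbB').trans_lt (hgt x0 hx0)) (not_lt_of_gt (hall x0 hx0).2)

/-- Lemma 2.6 (tetrachotomy): two distinct blocks of a partition are either crossing,
separated, or one is nested inside the other—and exactly one of these occurs. -/
theorem tetrachotomy {k : ℕ} (π : Set (Set (Fin k))) (hπ : Setoid.IsPartition π)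
    (B B' : Set (Fin k)) (hB : B ∈ π) (hB' : B' ∈ π) (hne : B ≠ B') :
    (Crossing B B' ∨ Separated B B' ∨ NestedIn B B' ∨ NestedIn B' B) ∧
    ¬ (Crossing B B' ∧ Separated B B') ∧
    ¬ (Crossing B B' ∧ NestedIn B B') ∧
    ¬ (Crossing B B' ∧ NestedIn B' B) ∧
    ¬ (Separated B B' ∧ NestedIn B B') ∧
    ¬ (Separated B B' ∧ NestedIn B' B) ∧
    ¬ (NestedIn B B' ∧ NestedIn B' B) := by
  have hdisj : ∀ x, x ∈ B → x ∈ B' → False := by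
    intro x hx hx'
    obtain ⟨b0, _, hu⟩ := hπ.2 x
    exact hne ((hu B ⟨hB, hx⟩).trans (hu B' ⟨hB', hx'⟩).symm)
  have hBne : B.Nonempty :=
    Set.nonempty_iff_ne_empty.mpr (fun h => hπ.1 (h ▸ hB))
  have hB'ne : B'.Nonempty :=
    Set.nonempty_iff_ne_empty.mpr (fun h => hπ.1 (h ▸ hB'))
  have hSsymm : Separated B B' → Separated B' B := Or.symm
  have hCsymm : Crossing B B' → Crossing B' B := Or.symm
  refine ⟨?_, ?_, ?_, ?_, ?_, ?_, ?_⟩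
  · by_cases hc : Crossing B B'
    · exact Or.inl hc
    have hnc1 : ¬ CrossingOne B B' := fun h => hc (Or.inl h)
    have hnc2 : ¬ CrossingOne B' B := fun h => hc (Or.inr h)
    obtain ⟨m, hmU, hmmin⟩ := exists_min' (B ∪ B') (hBne.mono Set.subset_union_left)
    rcases hmU with hmB | hmB'
    · obtain ⟨M, hMB, hMmax⟩ := exists_max' B hBne
      rcases half_lemma B B' hdisj hB'ne hnc1 m M hmB hMB
        (fun y hy => hmmin y (Or.inr hy)) hMmax with hs | hn
      · exact Or.inr (Or.inl (Or.inl ⟨M, hMmax, hs⟩))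
      · exact Or.inr (Or.inr (Or.inr hn))
    · obtain ⟨M, hMB', hMmax⟩ := exists_max' B' hB'ne
      rcases half_lemma B' B (fun x h h' => hdisj x h' h) hBne hnc2 m M hmB' hMB'
        (fun y hy => hmmin y (Or.inl hy)) hMmax with hs | hn
      · exact Or.inr (Or.inl (Or.inr ⟨M, hMmax, hs⟩))
      · exact Or.inr (Or.inr (Or.inl hn))
  · rintro ⟨hc, hs⟩
    exact crossing_not_separated B B' hc hs
  · rintro ⟨hc, hn⟩
    exact crossing_not_nested B B' hc hn
  · rintro ⟨hc, hn⟩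
    exact crossing_not_nested B' B (hCsymm hc) hn
  · rintro ⟨hs, hn⟩
    exact separated_not_nested B B' hBne hs hn
  · rintro ⟨hs, hn⟩
    exact separated_not_nested B' B hB'ne (hSsymm hs) hn
  · rintro ⟨⟨a, haB', _, _, _, _, hall⟩, ⟨c, hcB, _, _, _, _, hall'⟩⟩
    exact absurd (hall c hcB).1 (lt_asymm (hall' a haB').1)

end aux
end

section
/- Fix a bigraph G = (V, E₁, E₂) and a labeling c : [k] → V, and let π ∈ P(c,G). Then the unobstructed nesting relation ≺_un on the blocks of π is a strict partial order (irreflexive, antisymmetric, transitive). -/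
/-- A bigraph: two edge sets on a common vertex set, `E1` reflexive,
`E2` irreflexive and symmetric. -/
structure Bigraph (V : Type) where
  E1 : Set (V × V)
  E2 : Set (V × V)
  refl1 : ∀ v : V, (v, v) ∈ E1
  irrefl2 : ∀ v : V, (v, v) ∉ E2
  symm2 : ∀ v w : V, (v, w) ∈ E2 → (w, v) ∈ E2

/-- `i` and `j` lie in the same block of `π`. -/
def SameBlock {k : ℕ} (π : Set (Set (Fin k))) (i j : Fin k) : Prop :=
  ∃ B ∈ π, i ∈ B ∧ j ∈ B

/-- Every block of `π` is monochromatic under `c`. -/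
def Monochromatic {V : Type} {k : ℕ} (c : Fin k → V) (π : Set (Set (Fin k))) : Prop :=
  ∀ B ∈ π, ∀ i ∈ B, ∀ j ∈ B, c i = c j

/-- `π ∈ P(c, G)` (Definition 1.3 of compatible partitions). -/
def MemP {V : Type} {k : ℕ} (G : Bigraph V) (c : Fin k → V) (π : Set (Set (Fin k))) : Prop :=
  Setoid.IsPartition π ∧ Monochromatic c π ∧
  (∀ i1 j i2 : Fin k, i1 < j → j < i2 → SameBlock π i1 i2 → (c i1, c j) ∈ G.E1) ∧
  (∀ i1 j1 i2 j2 : Fin k, i1 < j1 → j1 < i2 → i2 < j2 →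
    SameBlock π i1 i2 → SameBlock π j1 j2 → ¬ SameBlock π i1 j1 → (c i2, c j1) ∈ G.E2)

/-- The unobstructed nesting relation `B ≺_un B'` on blocks of `π`. -/
def PrecUn {V : Type} {k : ℕ} (G : Bigraph V) (c : Fin k → V) (π : Set (Set (Fin k)))
    (B B' : Set (Fin k)) : Prop :=
  B ≠ B' ∧ (∀ i ∈ B, ∀ j ∈ B', c i = c j) ∧ NestedIn B' B ∧
  ∀ B'' ∈ π, NestedIn B'' B → NestedIn B' B'' →
    ∀ i ∈ B, ∀ j ∈ B'', (c i, c j) ∈ G.E2 ∨ c i = c j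


lemma block_eq_of_mem {k : ℕ} {π : Set (Set (Fin k))} (hp : Setoid.IsPartition π)
    {B B' : Set (Fin k)} (hB : B ∈ π) (hB' : B' ∈ π) {x : Fin k}
    (hx : x ∈ B) (hx' : x ∈ B') : B = B' := by
  obtain ⟨C, ⟨hCπ, hxC⟩, huniq⟩ := hp.2 x
  rw [huniq B ⟨hB, hx⟩, huniq B' ⟨hB', hx'⟩]

lemma nested_asymm {k : ℕ} {B B' : Set (Fin k)}
    (h1 : NestedIn B' B) (h2 : NestedIn B B') : False := by
  obtain ⟨i, hi, j, hj, hij, hgap, hsub⟩ := h1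
  obtain ⟨i', hi', j', hj', hij', hgap', hsub'⟩ := h2
  exact absurd (hsub i' hi').1 (not_lt.mpr (le_of_lt (hsub' i hi).1))

lemma nested_trans {k : ℕ} {A B C : Set (Fin k)}
    (h1 : NestedIn A B) (h2 : NestedIn B C) : NestedIn A C := by
  obtain ⟨a, ha, b, hb, hab, hgap1, hsub1⟩ := h1
  obtain ⟨i, hi, j, hj, hij, hgap2, hsub2⟩ := h2
  exact ⟨i, hi, j, hj, hij, hgap2, fun x hx =>
    ⟨lt_trans (hsub2 a ha).1 (hsub1 x hx).1, lt_trans (hsub1 x hx).2 (hsub2 b hb).2⟩⟩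

lemma nested_trichotomy {k : ℕ} {π : Set (Set (Fin k))} (hp : Setoid.IsPartition π)
    {B' B3 B2 : Set (Fin k)} (hB' : B' ∈ π) (hB3 : B3 ∈ π) (hne : B' ≠ B3)
    (h1 : NestedIn B2 B') (h2 : NestedIn B2 B3) {x : Fin k} (hx : x ∈ B2) :
    NestedIn B3 B' ∨ NestedIn B' B3 ∨ Crossing B' B3 := by
  obtain ⟨a', ha', b', hb', hab', hgap', hsub'⟩ := h1
  obtain ⟨a, ha, b, hb, hab, hgap, hsub⟩ := h2
  have hdisj : ∀ u ∈ B', ∀ v ∈ B3, u ≠ v := by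
    intro u hu v hv h
    subst h
    exact hne (block_eq_of_mem hp hB' hB3 hu hv)
  have hax := hsub x hx   -- a < x < b
  have hax' := hsub' x hx -- a' < x < b'
  by_cases hc : Crossing B' B3
  · exact Or.inr (Or.inr hc)
  · rcases lt_trichotomy a a' with haa | haa | haa
    · -- a < a' : show b' < b, then B' ⊆ (a,b)
      have hbb : b' < b := by
        rcases lt_trichotomy b' b with h | h | h
        · exact h
        · exact absurd h (hdisj b' hb' b hb)
        · exact absurd (Or.inr ⟨a, a', b, b', haa, lt_trans hax'.1 hax.2, h, ha, hb, ha', hb'⟩) hc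
      refine Or.inr (Or.inl ⟨a, ha, b, hb, hab, hgap, fun p hp => ?_⟩)
      constructor
      · rcases lt_trichotomy a p with h | h | h
        · exact h
        · exact absurd h.symm (hdisj p hp a ha)
        · exact absurd (Or.inl ⟨p, a, a', b, h, haa, lt_trans hax'.1 hax.2, hp, ha', ha, hb⟩) hc
      · rcases lt_trichotomy p b with h | h | h
        · exact h
        · exact absurd h (hdisj p hp b hb)
        · exact absurd (Or.inr ⟨a, a', b, p, haa, lt_trans hax'.1 hax.2, h, ha, hb, ha', hp⟩) hc
    · exact absurd haa.symm (hdisj a' ha' a ha)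
    · -- a' < a : show b < b', then B3 ⊆ (a',b')
      have hbb : b < b' := by
        rcases lt_trichotomy b b' with h | h | h
        · exact h
        · exact absurd h.symm (hdisj b' hb' b hb)
        · exact absurd (Or.inl ⟨a', a, b', b, haa, lt_trans hax.1 hax'.2, h, ha', hb', ha, hb⟩) hc
      refine Or.inl ⟨a', ha', b', hb', hab', hgap', fun q hq => ?_⟩
      constructor
      · rcases lt_trichotomy a' q with h | h | h
        · exact h
        · exact absurd h (hdisj a' ha' q hq)
        · exact absurd (Or.inr ⟨q, a', a, b', h, haa, lt_trans hax.1 hax'.2, hq, ha, ha', hb'⟩) hc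
      · rcases lt_trichotomy q b' with h | h | h
        · exact h
        · exact absurd h.symm (hdisj b' hb' q hq)
        · exact absurd (Or.inl ⟨a', a, b', q, haa, lt_trans hax.1 hax'.2, h, ha', hb', ha, hq⟩) hc

lemma not_sameBlock {k : ℕ} {π : Set (Set (Fin k))} (hp : Setoid.IsPartition π)
    {A B : Set (Fin k)} (hA : A ∈ π) (hB : B ∈ π) (hne : A ≠ B)
    {i j : Fin k} (hi : i ∈ A) (hj : j ∈ B) : ¬ SameBlock π i j := by
  rintro ⟨C, hC, hiC, hjC⟩
  exact hne ((block_eq_of_mem hp hA hC hi hiC).trans (block_eq_of_mem hp hC hB hjC hj))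

lemma crossingOne_E2 {V : Type} {k : ℕ} (G : Bigraph V) (c : Fin k → V)
    {π : Set (Set (Fin k))} (hπ : MemP G c π)
    {A B : Set (Fin k)} (hA : A ∈ π) (hB : B ∈ π) (hne : A ≠ B)
    (hcr : CrossingOne A B) {p q : Fin k} (hp : p ∈ A) (hq : q ∈ B) :
    (c p, c q) ∈ G.E2 := by
  obtain ⟨i, i', j, j', h1, h2, h3, hiA, hjA, hi'B, hj'B⟩ := hcr
  have h := hπ.2.2.2 i i' j j' h1 h2 h3 ⟨A, hA, hiA, hjA⟩ ⟨B, hB, hi'B, hj'B⟩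
    (not_sameBlock hπ.1 hA hB hne hiA hi'B)
  have e1 : c p = c j := hπ.2.1 A hA p hp j hjA
  have e2 : c q = c i' := hπ.2.1 B hB q hq i' hi'B
  rw [e1, e2]; exact h

/-- Lemma 2.21(1): the unobstructed nesting relation is a strict partial order on the
blocks of `π ∈ P(c,G)`: irreflexive, antisymmetric, and transitive. -/
theorem precUn_strict_partial_order {V : Type} {k : ℕ} (G : Bigraph V) (c : Fin k → V)
    (π : Set (Set (Fin k))) (hπ : MemP G c π) :
    (∀ B ∈ π, ¬ PrecUn G c π B B) ∧
    (∀ B ∈ π, ∀ B' ∈ π, PrecUn G c π B B' → ¬ PrecUn G c π B' B) ∧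
    (∀ B ∈ π, ∀ B' ∈ π, ∀ B'' ∈ π,
      PrecUn G c π B B' → PrecUn G c π B' B'' → PrecUn G c π B B'') := by
  have hpart := hπ.1
  have hmono := hπ.2.1
  refine ⟨?_, ?_, ?_⟩
  · intro B hB h
    exact h.1 rfl
  · rintro B hB B' hB' ⟨_, _, hn, _⟩ ⟨_, _, hn', _⟩
    exact nested_asymm hn hn'
  · rintro B hB B' hB' B'' hB'' ⟨hne1, hcol1, hn1, hun1⟩ ⟨hne2, hcol2, hn2, hun2⟩
    obtain ⟨m, hm⟩ : B'.Nonempty :=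
      Set.nonempty_iff_ne_empty.mpr (fun h => hpart.1 (h ▸ hB'))
    obtain ⟨x, hx⟩ : B''.Nonempty :=
      Set.nonempty_iff_ne_empty.mpr (fun h => hpart.1 (h ▸ hB''))
    refine ⟨?_, ?_, nested_trans hn2 hn1, ?_⟩
    · rintro rfl
      exact nested_asymm hn2 hn1
    · intro i hi j hj
      exact (hcol1 i hi m hm).trans (hcol2 m hm j hj)
    · intro B3 hB3 hnB3B hnB3 i hi j hj
      by_cases hB3eq : B3 = B'
      · right
        exact hcol1 i hi j (hB3eq ▸ hj)
      · have hne' : B' ≠ B3 := fun h => hB3eq h.symm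
        rcases nested_trichotomy hpart hB' hB3 hne' hn2 hnB3 hx with h | h | h
        · have res := hun2 B3 hB3 h hnB3 m hm j hj
          rwa [hcol1 i hi m hm]
        · exact hun1 B3 hB3 hnB3B h i hi j hj
        · rcases h with hcr | hcr
          · left
            have := crossingOne_E2 G c hπ hB' hB3 hne' hcr hm hj
            rwa [hcol1 i hi m hm]
          · left
            have := G.symm2 _ _ (crossingOne_E2 G c hπ hB3 hB' (Ne.symm hne') hcr hj hm)
            rwa [hcol1 i hi m hm]
end

section
/- Fix a bigraph G and c : [k] → V, and let π ∈ P(c,G). For every block B of π, the set {B' ∈ π : B' ≺_un B} is totally ordered with respect to the unobstructed nesting relation ≺_un. -/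
/-- Two blocks of a partition with a common element are equal. -/
lemma block_eq_of_mem_s2 {V : Type} {k : ℕ} {G : Bigraph V} {c : Fin k → V}
    {π : Set (Set (Fin k))} (hπ : MemP G c π) {A C : Set (Fin k)} (hA : A ∈ π) (hC : C ∈ π)
    {a : Fin k} (ha : a ∈ A) (haC : a ∈ C) : A = C :=
  ((hπ.1.2 a).unique ⟨hA, ha⟩ ⟨hC, haC⟩)

/-- A crossing between two distinct blocks of the same color is impossible. -/
lemma cross_eq_color {V : Type} {k : ℕ} {G : Bigraph V} {c : Fin k → V}
    {π : Set (Set (Fin k))} (hπ : MemP G c π) {A A' : Set (Fin k)}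
    (hA : A ∈ π) (hA' : A' ∈ π) (hne : A ≠ A') {a x y z : Fin k}
    (h1 : a < x) (h2 : x < y) (h3 : y < z)
    (ha : a ∈ A) (hy : y ∈ A) (hx : x ∈ A') (hz : z ∈ A')
    (hcol : c y = c x) : False := by
  have hns : ¬ SameBlock π a x := by
    rintro ⟨C, hC, haC, hxC⟩
    exact hne ((block_eq_of_mem_s2 hπ hA hC ha haC).trans
      (block_eq_of_mem_s2 hπ hA' hC hx hxC).symm)
  have he2 := hπ.2.2.2 a x y z h1 h2 h3 ⟨A, hA, ha, hy⟩ ⟨A', hA', hx, hz⟩ hns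
  rw [hcol] at he2
  exact G.irrefl2 _ he2

/-- Key step: if `B` is unobstructedly nested in both `B1` and `B2`, and the gap of `B1`
containing `B` starts before the gap of `B2` containing `B`, then `B2 ≺_un B1`,
i.e. `PrecUn G c π B1 B2`. -/
lemma precUn_aux {V : Type} {k : ℕ} {G : Bigraph V} {c : Fin k → V}
    {π : Set (Set (Fin k))} (hπ : MemP G c π) {B B1 B2 : Set (Fin k)}
    (hB : B ∈ π) (h1 : B1 ∈ π) (h2 : B2 ∈ π) (hne : B1 ≠ B2)
    (p1 : PrecUn G c π B1 B) (p2 : PrecUn G c π B2 B)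
    {i1 j1 i2 j2 : Fin k}
    (hi1 : i1 ∈ B1) (hj1 : j1 ∈ B1) (hij1 : i1 < j1)
    (hcons1 : ∀ x ∈ B1, ¬ (i1 < x ∧ x < j1)) (hsub1 : ∀ x ∈ B, i1 < x ∧ x < j1)
    (hi2 : i2 ∈ B2) (hj2 : j2 ∈ B2) (hij2 : i2 < j2)
    (hsub2 : ∀ x ∈ B, i2 < x ∧ x < j2)
    (hlt : i1 < i2) : PrecUn G c π B1 B2 := by
  -- B is nonempty
  have hBne : B.Nonempty := by
    rw [Set.nonempty_iff_ne_empty]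
    rintro rfl
    exact hπ.1.1 hB
  obtain ⟨b, hb⟩ := hBne
  have hc1 : ∀ i ∈ B1, c i = c b := fun i hi => p1.2.1 i hi b hb
  have hc2 : ∀ j ∈ B2, c j = c b := fun j hj => p2.2.1 j hj b hb
  have hdisj : ∀ x : Fin k, x ∈ B1 → x ∈ B2 → False := fun x hx hx' =>
    hne (block_eq_of_mem_s2 hπ h1 h2 hx hx')
  have hi2j1 : i2 < j1 := lt_trans (hsub2 b hb).1 (hsub1 b hb).2
  -- every element of B2 lies strictly between i1 and j1
  have hsubB2 : ∀ x ∈ B2, i1 < x ∧ x < j1 := by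
    intro x hx
    constructor
    · by_contra hxi
      push_neg at hxi
      have hxi' : x < i1 := lt_of_le_of_ne hxi (fun h => hdisj i1 hi1 (h ▸ hx))
      exact cross_eq_color hπ h2 h1 hne.symm hxi' hlt hi2j1 hx hi2 hi1 hj1
        ((hc2 i2 hi2).trans (hc1 i1 hi1).symm)
    · by_contra hxj
      push_neg at hxj
      have hxj' : j1 < x := lt_of_le_of_ne hxj (fun h => hdisj x (h ▸ hj1) hx)
      exact cross_eq_color hπ h1 h2 hne hlt hi2j1 hxj' hi1 hj1 hi2 hx
        ((hc1 j1 hj1).trans (hc2 i2 hi2).symm)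
  refine ⟨hne, fun i hi j hj => (hc1 i hi).trans (hc2 j hj).symm,
    ⟨i1, hi1, j1, hj1, hij1, hcons1, hsubB2⟩, ?_⟩
  intro B'' hB'' hn1 hn2 i hi j hj
  obtain ⟨u, hu, v, hv, huv, hconsuv, hsubuv⟩ := hn2
  have hnB : NestedIn B B'' := by
    refine ⟨u, hu, v, hv, huv, hconsuv, fun x hx => ?_⟩
    exact ⟨lt_trans (hsubuv i2 hi2).1 (hsub2 x hx).1,
      lt_trans (hsub2 x hx).2 (hsubuv j2 hj2).2⟩
  exact p1.2.2.2 B'' hB'' hn1 hnB i hi j hj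

/-- Lemma 2.21(2): for every block `B` of `π ∈ P(c,G)`, the set of blocks `B'` with
`B' ≺_un B` is totally ordered by `≺_un`. -/
theorem precUn_totally_ordered_below {V : Type} {k : ℕ} (G : Bigraph V) (c : Fin k → V)
    (π : Set (Set (Fin k))) (hπ : MemP G c π) :
    ∀ B ∈ π, ∀ B1 ∈ π, ∀ B2 ∈ π, PrecUn G c π B1 B → PrecUn G c π B2 B →
      B1 = B2 ∨ PrecUn G c π B1 B2 ∨ PrecUn G c π B2 B1 := by
  intro B hB B1 h1 B2 h2 p1 p2
  by_cases hne : B1 = B2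
  · exact Or.inl hne
  obtain ⟨i1, hi1, j1, hj1, hij1, hcons1, hsub1⟩ := p1.2.2.1
  obtain ⟨i2, hi2, j2, hj2, hij2, hcons2, hsub2⟩ := p2.2.2.1
  rcases lt_trichotomy i1 i2 with hlt | heq | hgt
  · exact Or.inr (Or.inl (precUn_aux hπ hB h1 h2 hne p1 p2 hi1 hj1 hij1 hcons1 hsub1
      hi2 hj2 hij2 hsub2 hlt))
  · exact absurd (block_eq_of_mem_s2 hπ h1 h2 hi1 (heq ▸ hi2)) hne
  · exact Or.inr (Or.inr (precUn_aux hπ hB h2 h1 (Ne.symm hne) p2 p1 hi2 hj2 hij2 hcons2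
      hsub2 hi1 hj1 hij1 hsub1 hgt))
end

section
/- Fix a bigraph G and c : [k] → V. The map Φ sending a pair (σ, (π_B)_{B∈σ}) — where σ ∈ P(c,G)⁰ and each π_B is an irreducible non-crossing partition of the block B — to the partition ⋃_{B∈σ} π_B is a bijection onto P(c,G). -/
def MemP0 {V : Type} {k : ℕ} (G : Bigraph V) (c : Fin k → V) (π : Set (Set (Fin k))) : Prop :=
  MemP G c π ∧ ∀ B ∈ π, ∀ B' ∈ π, ¬ PrecUn G c π B B'

/-- `P` is a partition of the subset `S`. -/
def PartOn {k : ℕ} (S : Set (Fin k)) (P : Set (Set (Fin k))) : Prop :=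
  ∅ ∉ P ∧ (∀ A ∈ P, A ⊆ S) ∧ ∀ a ∈ S, ∃! A, A ∈ P ∧ a ∈ A

/-- No two distinct blocks of `P` cross. -/
def NonCrossingPart {k : ℕ} (P : Set (Set (Fin k))) : Prop :=
  ∀ A ∈ P, ∀ A' ∈ P, A ≠ A' → ¬ Crossing A A'

/-- `P` is irreducible: its interval envelope is the one-block partition, i.e. the
blocks of `P` cannot be split into a nonempty left part and a nonempty right part. -/
def IrreducibleOn {k : ℕ} (P : Set (Set (Fin k))) : Prop :=
  ∀ j : Fin k, (∀ A ∈ P, (∀ x ∈ A, x ≤ j) ∨ (∀ x ∈ A, j < x)) →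
    (∀ A ∈ P, ∀ x ∈ A, x ≤ j) ∨ (∀ A ∈ P, ∀ x ∈ A, j < x)

namespace P0Lemma
open Relation

variable {V : Type} {k : ℕ}

/-! ### Basic finiteness and order helpers -/

lemma exmin (S : Set (Fin k)) (h : S.Nonempty) : ∃ m, m ∈ S ∧ ∀ x ∈ S, m ≤ x := by
  obtain ⟨a, ha, hle⟩ := Set.exists_min_image S id S.toFinite h
  exact ⟨a, ha, hle⟩

lemma exmax (S : Set (Fin k)) (h : S.Nonempty) : ∃ m, m ∈ S ∧ ∀ x ∈ S, x ≤ m := by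
  obtain ⟨a, ha, hle⟩ := Set.exists_max_image S id S.toFinite h
  exact ⟨a, ha, hle⟩

/-! ### Crossing / nesting geometry -/

lemma crossing_comm {A B : Set (Fin k)} : Crossing A B ↔ Crossing B A := Or.comm

lemma nested_disj {X P : Set (Fin k)} (h : NestedIn X P) : ∀ x ∈ X, x ∉ P := by
  obtain ⟨i, hi, j, hj, hij, hgap, hall⟩ := h
  intro x hx hxP
  exact hgap x hxP (hall x hx)

lemma nested_ne {X P : Set (Fin k)} (h : NestedIn X P) (hne : X.Nonempty) : X ≠ P := by
  obtain ⟨x, hx⟩ := hne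
  intro he
  exact nested_disj h x hx (he ▸ hx)

/-- gap uniqueness: two gaps of `S` sharing a common interior point coincide. -/
lemma gap_unique {S : Set (Fin k)} {i j i' j' p : Fin k}
    (hi : i ∈ S) (hj : j ∈ S) (hg : ∀ x ∈ S, ¬(i < x ∧ x < j))
    (hi' : i' ∈ S) (hj' : j' ∈ S) (hg' : ∀ x ∈ S, ¬(i' < x ∧ x < j'))
    (hp : i < p ∧ p < j) (hp' : i' < p ∧ p < j') : i = i' ∧ j = j' := by
  have h1 : ¬(i < i' ∧ i' < j) := hg i' hi'
  have h2 : ¬(i' < i ∧ i < j') := hg' i hi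
  have h3 : ¬(i < j' ∧ j' < j) := hg j' hj'
  have h4 : ¬(i' < j ∧ j < j') := hg' j hj
  constructor
  · rcases lt_trichotomy i i' with h | h | h
    · exact (h1 ⟨h, lt_trans hp'.1 hp.2⟩).elim
    · exact h
    · exact (h2 ⟨h, lt_trans hp.1 hp'.2⟩).elim
  · rcases lt_trichotomy j j' with h | h | h
    · exact (h4 ⟨lt_trans hp'.1 hp.2, h⟩).elim
    · exact h
    · exact (h3 ⟨lt_trans hp.1 hp'.2, h⟩).elim

/-- Workhorse: if `B` is disjoint from `A`, does not cross `A`, and some element of `B`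
lies strictly between two elements of `A`, then `B` is nested in `A`. -/
lemma nested_of_enters {A B : Set (Fin k)} (hd : ∀ x ∈ B, x ∉ A) (hnc : ¬ Crossing A B)
    {b0 a1 a2 : Fin k} (hb0 : b0 ∈ B) (ha1 : a1 ∈ A) (ha2 : a2 ∈ A)
    (h1 : a1 < b0) (h2 : b0 < a2) : NestedIn B A := by
  obtain ⟨i, hiA, himax⟩ := exmax {x ∈ A | x < b0} ⟨a1, ha1, h1⟩
  obtain ⟨j, hjA, hjmin⟩ := exmin {x ∈ A | b0 < x} ⟨a2, ha2, h2⟩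
  have hib : i < b0 := hiA.2
  have hbj : b0 < j := hjA.2
  refine ⟨i, hiA.1, j, hjA.1, lt_trans hib hbj, ?_, ?_⟩
  · rintro x hx ⟨hix, hxj⟩
    rcases lt_trichotomy x b0 with h | h | h
    · exact absurd (himax x ⟨hx, h⟩) (not_le.mpr hix)
    · exact hd b0 hb0 (h ▸ hx)
    · exact absurd (hjmin x ⟨hx, h⟩) (not_le.mpr hxj)
  · intro x hx
    constructor
    · by_contra hle
      push_neg at hle
      have hxi : x < i := lt_of_le_of_ne hle (fun he => hd x hx (he ▸ hiA.1))
      exact hnc (Or.inr ⟨x, i, b0, j, hxi, hib, hbj, hx, hb0, hiA.1, hjA.1⟩)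
    · by_contra hle
      push_neg at hle
      have hjx : j < x := lt_of_le_of_ne hle (fun he => hd x hx (he.symm ▸ hjA.1))
      exact hnc (Or.inl ⟨i, b0, j, x, hib, hbj, hjx, hiA.1, hjA.1, hb0, hx⟩)

/-- hull comparability for disjoint non-crossing sets whose hulls share a point. -/
lemma hull_comp {A B : Set (Fin k)} (hd : ∀ x ∈ B, x ∉ A) (hnc : ¬ Crossing A B)
    {mA MA mB MB : Fin k}
    (hmA : mA ∈ A) (hMA : MA ∈ A) (hminA : ∀ x ∈ A, mA ≤ x) (hmaxA : ∀ x ∈ A, x ≤ MA)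
    (hmB : mB ∈ B) (hMB : MB ∈ B) (hminB : ∀ x ∈ B, mB ≤ x) (hmaxB : ∀ x ∈ B, x ≤ MB)
    {p : Fin k} (h1 : mA ≤ p) (h2 : p ≤ MA) (h3 : mB ≤ p) (h4 : p ≤ MB) :
    (mA ≤ mB ∧ MB ≤ MA) ∨ (mB ≤ mA ∧ MA ≤ MB) := by
  rcases le_or_gt mA mB with h | h
  · left
    refine ⟨h, ?_⟩
    by_contra hlt
    push_neg at hlt
    have hmAmB : mA < mB := lt_of_le_of_ne h (fun he => hd mB hmB (he ▸ hmA))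
    have hmBMA : mB < MA := by
      have : mB ≤ MA := le_trans h3 h2
      exact lt_of_le_of_ne this (fun he => hd mB hmB (he ▸ hMA))
    exact hnc (Or.inl ⟨mA, mB, MA, MB, hmAmB, hmBMA, hlt, hmA, hMA, hmB, hMB⟩)
  · right
    refine ⟨le_of_lt h, ?_⟩
    by_contra hlt
    push_neg at hlt
    have hmAMB : mA < MB := by
      have : mA ≤ MB := le_trans h1 h4
      exact lt_of_le_of_ne this (fun he => hd MB hMB (he ▸ hmA))
    exact hnc (Or.inr ⟨mB, mA, MB, MA, h, hmAMB, hlt, hmB, hMB, hmA, hMA⟩)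

/-! ### Partition helpers -/

lemma block_nonempty {π : Set (Set (Fin k))} (hp : Setoid.IsPartition π)
    {A : Set (Fin k)} (hA : A ∈ π) : A.Nonempty := by
  rcases Set.eq_empty_or_nonempty A with h | h
  · exact absurd (h ▸ hA) hp.1
  · exact h

lemma block_eq {π : Set (Set (Fin k))} (hp : Setoid.IsPartition π)
    {A A' : Set (Fin k)} (hA : A ∈ π) (hA' : A' ∈ π)
    {x : Fin k} (hx : x ∈ A) (hx' : x ∈ A') : A = A' := by
  obtain ⟨B, _, hBu⟩ := hp.2 x
  have h1 := hBu A ⟨hA, hx⟩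
  have h2 := hBu A' ⟨hA', hx'⟩
  rw [h1, h2]

lemma block_disj {π : Set (Set (Fin k))} (hp : Setoid.IsPartition π)
    {A A' : Set (Fin k)} (hA : A ∈ π) (hA' : A' ∈ π) (hne : A ≠ A') :
    ∀ x ∈ A, x ∉ A' := fun x hx hx' => hne (block_eq hp hA hA' hx hx')

lemma mem_block {π : Set (Set (Fin k))} (hp : Setoid.IsPartition π) (a : Fin k) :
    ∃ A ∈ π, a ∈ A := by
  obtain ⟨B, ⟨hB, haB⟩, _⟩ := hp.2 a
  exact ⟨B, hB, haB⟩

lemma not_sameBlock {π : Set (Set (Fin k))} (hp : Setoid.IsPartition π)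
    {A A' : Set (Fin k)} (hA : A ∈ π) (hA' : A' ∈ π) (hne : A ≠ A')
    {x y : Fin k} (hx : x ∈ A) (hy : y ∈ A') : ¬ SameBlock π x y := by
  rintro ⟨B, hB, hxB, hyB⟩
  have h1 := block_eq hp hA hB hx hxB
  have h2 := block_eq hp hA' hB hy hyB
  exact hne (h1.trans h2.symm)

/-! ### Consequences of `MemP` -/

lemma crossE2 {G : Bigraph V} {c : Fin k → V} {π : Set (Set (Fin k))} (hπ : MemP G c π)
    {A A' : Set (Fin k)} (hA : A ∈ π) (hA' : A' ∈ π) (hne : A ≠ A')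
    (hcr : Crossing A A') {a a' : Fin k} (ha : a ∈ A) (ha' : a' ∈ A') :
    (c a, c a') ∈ G.E2 := by
  rcases hcr with ⟨i, i', j, j', h1, h2, h3, hiA, hjA, hi'A, hj'A⟩ |
    ⟨i, i', j, j', h1, h2, h3, hiA, hjA, hi'A, hj'A⟩
  · -- i,j ∈ A; i',j' ∈ A'
    have := hπ.2.2.2 i i' j j' h1 h2 h3 ⟨A, hA, hiA, hjA⟩ ⟨A', hA', hi'A, hj'A⟩
      (not_sameBlock hπ.1 hA hA' hne hiA hi'A)
    -- (c j, c i') ∈ E2, c j = c a, c i' = c a'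
    have e1 : c j = c a := hπ.2.1 A hA j hjA a ha
    have e2 : c i' = c a' := hπ.2.1 A' hA' i' hi'A a' ha'
    rwa [e1, e2] at this
  · -- i,j ∈ A'; i',j' ∈ A
    have := hπ.2.2.2 i i' j j' h1 h2 h3 ⟨A', hA', hiA, hjA⟩ ⟨A, hA, hi'A, hj'A⟩
      (not_sameBlock hπ.1 hA' hA (Ne.symm hne) hiA hi'A)
    have e1 : c j = c a' := hπ.2.1 A' hA' j hjA a' ha'
    have e2 : c i' = c a := hπ.2.1 A hA i' hi'A a ha
    rw [e1, e2] at this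
    exact G.symm2 _ _ this

lemma noncross_mono {G : Bigraph V} {c : Fin k → V} {π : Set (Set (Fin k))} (hπ : MemP G c π)
    {A A' : Set (Fin k)} (hA : A ∈ π) (hA' : A' ∈ π) (hne : A ≠ A')
    (hcol : ∀ x ∈ A, ∀ y ∈ A', c x = c y) : ¬ Crossing A A' := by
  intro hcr
  obtain ⟨a, ha⟩ := block_nonempty hπ.1 hA
  obtain ⟨a', ha'⟩ := block_nonempty hπ.1 hA'
  have := crossE2 hπ hA hA' hne hcr ha ha'
  rw [hcol a ha a' ha'] at this
  exact G.irrefl2 _ this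

end P0Lemma
namespace P0Lemma
open Relation

variable {V : Type} {k : ℕ}

section Classes

variable (G : Bigraph V) (c : Fin k → V) (π : Set (Set (Fin k)))

def Rel (A B : Set (Fin k)) : Prop :=
  A ∈ π ∧ B ∈ π ∧ (PrecUn G c π A B ∨ PrecUn G c π B A)

def SameCls (A B : Set (Fin k)) : Prop := A = B ∨ Relation.TransGen (Rel G c π) A B

def cls (A : Set (Fin k)) : Set (Set (Fin k)) := {B | B ∈ π ∧ SameCls G c π A B}

def sigmaStar : Set (Set (Fin k)) := {S | ∃ A ∈ π, S = ⋃₀ cls G c π A}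

end Classes

variable {G : Bigraph V} {c : Fin k → V} {π : Set (Set (Fin k))}

lemma rel_symm {A B : Set (Fin k)} (h : Rel G c π A B) : Rel G c π B A :=
  ⟨h.2.1, h.1, h.2.2.symm⟩

lemma transGen_symm {A B : Set (Fin k)} (h : Relation.TransGen (Rel G c π) A B) :
    Relation.TransGen (Rel G c π) B A := by
  induction h with
  | single e => exact Relation.TransGen.single (rel_symm e)
  | tail _ e ih => exact Relation.TransGen.head (rel_symm e) ih

lemma sameCls_refl (A : Set (Fin k)) : SameCls G c π A A := Or.inl rfl

lemma sameCls_symm {A B : Set (Fin k)} (h : SameCls G c π A B) : SameCls G c π B A := by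
  rcases h with h | h
  · exact Or.inl h.symm
  · exact Or.inr (transGen_symm h)

lemma sameCls_trans {A B C : Set (Fin k)} (h1 : SameCls G c π A B) (h2 : SameCls G c π B C) :
    SameCls G c π A C := by
  rcases h1 with h1 | h1
  · exact h1 ▸ h2
  · rcases h2 with h2 | h2
    · exact Or.inr (h2 ▸ h1)
    · exact Or.inr (h1.trans h2)

lemma sameCls_mem {A B : Set (Fin k)} (hA : A ∈ π) (h : SameCls G c π A B) : B ∈ π := by
  rcases h with h | h
  · exact h ▸ hA
  · induction h with
    | single e => exact e.2.1
    | tail _ e _ => exact e.2.1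

lemma cls_self {A : Set (Fin k)} (hA : A ∈ π) : A ∈ cls G c π A := ⟨hA, sameCls_refl A⟩

lemma mem_cls_iff {A B : Set (Fin k)} : B ∈ cls G c π A ↔ B ∈ π ∧ SameCls G c π A B := Iff.rfl

lemma cls_eq_of_sameCls {A B : Set (Fin k)} (h : SameCls G c π A B) :
    cls G c π A = cls G c π B := by
  ext X
  constructor
  · rintro ⟨hX, hs⟩
    exact ⟨hX, sameCls_trans (sameCls_symm h) hs⟩
  · rintro ⟨hX, hs⟩
    exact ⟨hX, sameCls_trans h hs⟩

lemma cls_eq_of_mem {A A' X : Set (Fin k)} (h : X ∈ cls G c π A) (h' : X ∈ cls G c π A') :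
    cls G c π A = cls G c π A' :=
  (cls_eq_of_sameCls h.2).trans (cls_eq_of_sameCls h'.2).symm

lemma sameCls_color (hπ : MemP G c π) {A B : Set (Fin k)} (hA : A ∈ π)
    (h : SameCls G c π A B) : ∀ x ∈ A, ∀ y ∈ B, c x = c y := by
  rcases h with h | h
  · exact h ▸ (fun x hx y hy => hπ.2.1 A hA x hx y hy)
  · induction h with
    | single e =>
      rcases e.2.2 with e' | e'
      · exact fun x hx y hy => e'.2.1 x hx y hy
      · exact fun x hx y hy => (e'.2.1 y hy x hx).symm
    | tail h1 e ih =>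
      intro x hx y hy
      obtain ⟨b, hb⟩ := block_nonempty hπ.1 e.1
      have h2 : c b = c y := by
        rcases e.2.2 with e' | e'
        · exact e'.2.1 b hb y hy
        · exact (e'.2.1 y hy b hb).symm
      exact (ih x hx b hb).trans h2

lemma cls_color (hπ : MemP G c π) {A1 X Y : Set (Fin k)} (hA1 : A1 ∈ π)
    (hX : X ∈ cls G c π A1) (hY : Y ∈ cls G c π A1) :
    ∀ x ∈ X, ∀ y ∈ Y, c x = c y := by
  have hs : SameCls G c π X Y := sameCls_trans (sameCls_symm hX.2) hY.2
  exact sameCls_color hπ hX.1 hs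

lemma cls_partOn (hπ : MemP G c π) {A1 : Set (Fin k)} (hA1 : A1 ∈ π) :
    PartOn (⋃₀ cls G c π A1) (cls G c π A1) := by
  refine ⟨?_, ?_, ?_⟩
  · intro h
    exact absurd h.1 hπ.1.1
  · exact fun A hA => Set.subset_sUnion_of_mem hA
  · rintro a ⟨X, hX, haX⟩
    refine ⟨X, ⟨hX, haX⟩, ?_⟩
    rintro Y ⟨hY, haY⟩
    exact block_eq hπ.1 hY.1 hX.1 haY haX

lemma cls_nc (hπ : MemP G c π) {A1 : Set (Fin k)} (hA1 : A1 ∈ π) :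
    NonCrossingPart (cls G c π A1) := by
  intro A hA A' hA' hne
  exact noncross_mono hπ hA.1 hA'.1 hne (cls_color hπ hA1 hA hA')

/-- top block of a class: contains the min and max of the class union. -/
lemma cls_top (hπ : MemP G c π) {A1 : Set (Fin k)} (hA1 : A1 ∈ π) :
    ∃ A0 ∈ cls G c π A1, ∃ m M, m ∈ A0 ∧ M ∈ A0 ∧
      ∀ x ∈ ⋃₀ cls G c π A1, m ≤ x ∧ x ≤ M := by
  have hUne : (⋃₀ cls G c π A1).Nonempty := by
    obtain ⟨a, ha⟩ := block_nonempty hπ.1 hA1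
    exact ⟨a, A1, cls_self hA1, ha⟩
  obtain ⟨m, hmU, hmmin⟩ := exmin _ hUne
  obtain ⟨A0, hA0cls, hmA0⟩ : ∃ A0 ∈ cls G c π A1, m ∈ A0 := hmU
  obtain ⟨M, hMA0, hMmax⟩ := exmax A0 ⟨m, hmA0⟩
  have hminA0 : ∀ x ∈ A0, m ≤ x := fun x hx => hmmin x ⟨A0, hA0cls, hx⟩
  have step : ∀ B B', B ∈ cls G c π A1 → Rel G c π B B' →
      (∀ x ∈ B, m ≤ x ∧ x ≤ M) → ∀ x ∈ B', m ≤ x ∧ x ≤ M := by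
    intro B B' hBcls e hB x hx
    have hB'cls : B' ∈ cls G c π A1 :=
      ⟨e.2.1, sameCls_trans hBcls.2 (Or.inr (Relation.TransGen.single e))⟩
    have hmlow : m ≤ x := hmmin x ⟨B', hB'cls, hx⟩
    rcases e.2.2 with e' | e'
    · -- B' nested in B
      obtain ⟨i, hi, j, hj, _, _, hall⟩ := e'.2.2.1
      exact ⟨hmlow, le_trans (le_of_lt (hall x hx).2) (hB j hj).2⟩
    · -- B nested in B'
      by_cases hBA0 : B' = A0
      · exact ⟨hmlow, hMmax x (hBA0 ▸ hx)⟩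
      obtain ⟨b, hb⟩ := block_nonempty hπ.1 e.1
      obtain ⟨i, hi, j, hj, _, _, hall⟩ := e'.2.2.1
      obtain ⟨mB, hmB, hminB⟩ := exmin B' (block_nonempty hπ.1 e.2.1)
      obtain ⟨MB, hMB, hmaxB⟩ := exmax B' (block_nonempty hπ.1 e.2.1)
      have hd : ∀ z ∈ B', z ∉ A0 := block_disj hπ.1 e.2.1 hA0cls.1 (fun h => hBA0 h)
      have hnc : ¬ Crossing A0 B' := noncross_mono hπ hA0cls.1 e.2.1
        (fun h => hBA0 h.symm) (cls_color hπ hA1 hA0cls hB'cls)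
      have hbB : m ≤ b ∧ b ≤ M := hB b hb
      have hbB' : mB ≤ b ∧ b ≤ MB :=
        ⟨le_trans (hminB i hi) (le_of_lt (hall b hb).1),
         le_trans (le_of_lt (hall b hb).2) (hmaxB j hj)⟩
      rcases hull_comp hd hnc hmA0 hMA0 hminA0 hMmax hmB hMB hminB hmaxB
        hbB.1 hbB.2 hbB'.1 hbB'.2 with ⟨_, h2⟩ | ⟨h1, _⟩
      · exact ⟨hmlow, le_trans (hmaxB x hx) h2⟩
      · have : mB = m := le_antisymm h1 (hmmin mB ⟨B', hB'cls, hmB⟩)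
        exact absurd (block_eq hπ.1 e.2.1 hA0cls.1 hmB (this ▸ hmA0)) hBA0
  have key : ∀ B, Relation.TransGen (Rel G c π) A0 B → ∀ x ∈ B, m ≤ x ∧ x ≤ M := by
    intro B h
    induction h with
    | single e => exact step A0 _ hA0cls e (fun x hx => ⟨hminA0 x hx, hMmax x hx⟩)
    | tail h1 e ih =>
      have hmid : _ ∈ cls G c π A1 :=
        ⟨e.1, sameCls_trans hA0cls.2 (Or.inr h1)⟩
      exact step _ _ hmid e ih
  refine ⟨A0, hA0cls, m, M, hmA0, hMA0, ?_⟩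
  rintro x ⟨X, hXcls, hxX⟩
  have hs : SameCls G c π A0 X := sameCls_trans (sameCls_symm hA0cls.2) hXcls.2
  rcases hs with hs | hs
  · exact ⟨hminA0 x (hs ▸ hxX), hMmax x (hs ▸ hxX)⟩
  · exact key X hs x hxX

end P0Lemma
namespace P0Lemma
open Relation

variable {V : Type} {k : ℕ} {G : Bigraph V} {c : Fin k → V} {π : Set (Set (Fin k))}

lemma partOn_disj {S : Set (Fin k)} {Q : Set (Set (Fin k))} (hp : PartOn S Q)
    {A A' : Set (Fin k)} (hA : A ∈ Q) (hA' : A' ∈ Q) (hne : A ≠ A') :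
    ∀ x ∈ A, x ∉ A' := by
  intro x hx hx'
  obtain ⟨B, _, hBu⟩ := hp.2.2 x (hp.2.1 A hA hx)
  exact hne ((hBu A ⟨hA, hx⟩).trans (hBu A' ⟨hA', hx'⟩).symm)

lemma partOn_nonempty {S : Set (Fin k)} {Q : Set (Set (Fin k))} (hp : PartOn S Q)
    {A : Set (Fin k)} (hA : A ∈ Q) : A.Nonempty := by
  rcases Set.eq_empty_or_nonempty A with h | h
  · exact absurd (h ▸ hA) hp.1
  · exact h

/-- In a non-crossing irreducible partition of `S`, the block of `min S` contains `max S`. -/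
lemma top_of_irr {S : Set (Fin k)} {Q : Set (Set (Fin k))}
    (hp : PartOn S Q) (hnc : NonCrossingPart Q) (hirr : IrreducibleOn Q)
    (hS : S.Nonempty) :
    ∃ A0 ∈ Q, ∃ m M, m ∈ A0 ∧ M ∈ A0 ∧ ∀ x ∈ S, m ≤ x ∧ x ≤ M := by
  obtain ⟨m, hmS, hmmin⟩ := exmin S hS
  obtain ⟨A0, ⟨hA0Q, hmA0⟩, _⟩ := hp.2.2 m hmS
  obtain ⟨j, hjA0, hjmax⟩ := exmax A0 (partOn_nonempty hp hA0Q)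
  have hsplit : ∀ A ∈ Q, (∀ x ∈ A, x ≤ j) ∨ (∀ x ∈ A, j < x) := by
    intro A hA
    by_cases hc : ∀ x ∈ A, x ≤ j
    · exact Or.inl hc
    · push_neg at hc
      obtain ⟨y, hy, hjy⟩ := hc
      right
      intro x hx
      by_contra hxj
      push_neg at hxj
      by_cases hAA0 : A = A0
      · exact absurd (hjmax y (hAA0 ▸ hy)) (not_le.mpr hjy)
      have hd := partOn_disj hp hA hA0Q hAA0
      have hxm : m < x :=
        lt_of_le_of_ne (hmmin x (hp.2.1 A hA hx)) (fun he => hd x hx (he ▸ hmA0))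
      have hxj' : x < j :=
        lt_of_le_of_ne hxj (fun he => hd x hx (he ▸ hjA0))
      exact hnc A0 hA0Q A hA (Ne.symm hAA0)
        (Or.inl ⟨m, x, j, y, hxm, hxj', hjy, hmA0, hjA0, hx, hy⟩)
  rcases hirr j hsplit with h | h
  · refine ⟨A0, hA0Q, m, j, hmA0, hjA0, fun x hx => ⟨hmmin x hx, ?_⟩⟩
    obtain ⟨B, ⟨hBQ, hxB⟩, _⟩ := hp.2.2 x hx
    exact h B hBQ x hxB
  · exact absurd (h A0 hA0Q j hjA0) (lt_irrefl j)

/-- From a top block, `IrreducibleOn` follows. -/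
lemma irr_of_top {Q : Set (Set (Fin k))} {A0 : Set (Fin k)} (hA0 : A0 ∈ Q)
    {m M : Fin k} (hm : m ∈ A0) (hM : M ∈ A0)
    (hhull : ∀ A ∈ Q, ∀ x ∈ A, m ≤ x ∧ x ≤ M) : IrreducibleOn Q := by
  intro j hsplit
  rcases hsplit A0 hA0 with h | h
  · exact Or.inl (fun A hA x hx => le_trans (hhull A hA x hx).2 (h M hM))
  · exact Or.inr (fun A hA x hx => lt_of_lt_of_le (h m hm) (hhull A hA x hx).1)

/-- parent block: for a non-top block `X` of a non-crossing partition with a top block,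
there is a block `P` with `X` nested in it, minimally so. -/
lemma parent_block {S : Set (Fin k)} {Q : Set (Set (Fin k))}
    (hp : PartOn S Q) (hnc : NonCrossingPart Q)
    {A0 : Set (Fin k)} (hA0 : A0 ∈ Q) {m M : Fin k}
    (hm : m ∈ A0) (hM : M ∈ A0) (hhull : ∀ x ∈ S, m ≤ x ∧ x ≤ M)
    {X : Set (Fin k)} (hX : X ∈ Q) (hXne : X ≠ A0) :
    ∃ P ∈ Q, P ≠ X ∧ NestedIn X P ∧
      (∀ Z ∈ Q, NestedIn Z P → NestedIn X Z → False) := by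
  classical
  set T : Set (Fin k) :=
    {a : Fin k | ∃ Z ∈ Q, a ∈ Z ∧ (∀ x ∈ X, a < x) ∧ ∃ b ∈ Z, ∀ x ∈ X, x < b} with hT
  have hmT : m ∈ T := by
    refine ⟨A0, hA0, hm, fun x hx => ?_, M, hM, fun x hx => ?_⟩
    · have h1 := (hhull x (hp.2.1 X hX hx)).1
      exact lt_of_le_of_ne h1 (fun he => partOn_disj hp hX hA0 hXne x hx (he ▸ hm))
    · have h1 := (hhull x (hp.2.1 X hX hx)).2
      exact lt_of_le_of_ne h1 (fun he => partOn_disj hp hX hA0 hXne x hx (he.symm ▸ hM))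
  obtain ⟨a, haT, hamax⟩ := exmax T ⟨m, hmT⟩
  obtain ⟨P, hPQ, haP, halow, b, hbP, hbhigh⟩ := haT
  obtain ⟨x0, hx0⟩ := partOn_nonempty hp hX
  have hPX : P ≠ X := by
    intro he
    exact absurd (halow a (he ▸ haP)) (lt_irrefl a)
  refine ⟨P, hPQ, hPX, ?_, ?_⟩
  · exact nested_of_enters (partOn_disj hp hX hPQ (Ne.symm hPX)) (hnc P hPQ X hX hPX)
      hx0 haP hbP (halow x0 hx0) (hbhigh x0 hx0)
  · intro Z hZQ h1 h2
    obtain ⟨i2, hi2, j2, hj2, _, _, hall2⟩ := h2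
    obtain ⟨i3, hi3, j3, hj3, _, hgap3, hall3⟩ := h1
    have hi2T : i2 ∈ T :=
      ⟨Z, hZQ, hi2, fun x hx => (hall2 x hx).1, j2, hj2, fun x hx => (hall2 x hx).2⟩
    have hi2a : i2 ≤ a := hamax i2 hi2T
    have hi3i2 : i3 < i2 := (hall3 i2 hi2).1
    rcases le_or_gt a i3 with h | h
    · exact absurd (le_trans hi2a h) (not_le.mpr hi3i2)
    · have hj3a : j3 ≤ a := by
        by_contra hc
        push_neg at hc
        exact hgap3 a haP ⟨h, hc⟩
      have : x0 < a := lt_of_lt_of_le (lt_trans (hall2 x0 hx0).2 (hall3 j2 hj2).2) hj3a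
      exact absurd (halow x0 hx0) (not_lt.mpr (le_of_lt this))

end P0Lemma
namespace P0Lemma
open Relation

variable {V : Type} {k : ℕ} {G : Bigraph V} {c : Fin k → V} {π : Set (Set (Fin k))}

/-- Claim C: a nested pair of blocks of the same class is unobstructedly nested in `π`. -/
lemma claimC (hπ : MemP G c π) {A1 P X : Set (Fin k)} (hA1 : A1 ∈ π)
    (hP : P ∈ cls G c π A1) (hX : X ∈ cls G c π A1) (hne : P ≠ X)
    (hnest : NestedIn X P) : PrecUn G c π P X := by
  refine ⟨hne, cls_color hπ hA1 hP hX, hnest, ?_⟩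
  intro D hD hn1 hn2 i hi j hj
  by_contra hgoal
  push_neg at hgoal
  -- D is not in the class
  have hDcls : D ∉ cls G c π A1 := by
    intro hDc
    exact hgoal.2 (cls_color hπ hA1 hP hDc i hi j hj)
  have hZD : ∀ Z ∈ cls G c π A1, Z ≠ D := by
    intro Z hZ he
    exact hDcls (he ▸ hZ)
  -- no class block crosses D
  have hnc2 : ∀ Z ∈ cls G c π A1, ¬ Crossing Z D := by
    intro Z hZ hcr
    obtain ⟨z0, hz0⟩ := block_nonempty hπ.1 hZ.1
    have := crossE2 hπ hZ.1 hD (hZD Z hZ) hcr hz0 hj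
    rw [cls_color hπ hA1 hZ hP z0 hz0 i hi] at this
    exact hgoal.1 (G.symm2 _ _ (G.symm2 _ _ this))
  obtain ⟨a, haP, b, hbP, hab, hgapP, hallD⟩ := hn1
  obtain ⟨s, hsD, t, htD, hst, hgapD, hallX⟩ := hn2
  -- the invariant: class blocks inside the gap (s,t) of D stay there along Rel-steps
  have closure : ∀ Z Z', (Z ∈ cls G c π A1 ∧ ∀ z ∈ Z, s < z ∧ z < t) →
      Rel G c π Z Z' → (Z' ∈ cls G c π A1 ∧ ∀ z ∈ Z', s < z ∧ z < t) := by
    rintro Z Z' ⟨hZcls, hZbound⟩ e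
    have hZ'cls : Z' ∈ cls G c π A1 :=
      ⟨e.2.1, sameCls_trans hZcls.2 (Or.inr (Relation.TransGen.single e))⟩
    refine ⟨hZ'cls, ?_⟩
    rcases e.2.2 with e' | e'
    · -- Z' nested in Z
      obtain ⟨u, hu, v, hv, _, _, hallZ'⟩ := e'.2.2.1
      intro z hz
      exact ⟨lt_trans (hZbound u hu).1 (hallZ' z hz).1,
        lt_trans (hallZ' z hz).2 (hZbound v hv).2⟩
    · -- Z nested in Z' via some gap (a2, b2) of Z'
      obtain ⟨a2, ha2, b2, hb2, ha2b2, hgapZ', hallZ⟩ := e'.2.2.1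
      have hdisj : ∀ x ∈ Z', x ∉ D := block_disj hπ.1 e.2.1 hD (hZD Z' hZ'cls)
      have hncDZ' : ¬ Crossing D Z' := fun h => hnc2 Z' hZ'cls (crossing_comm.mp h)
      by_cases hw : ∃ w ∈ Z', s < w ∧ w < t
      · obtain ⟨w, hw, hsw, hwt⟩ := hw
        have hnested := nested_of_enters hdisj hncDZ' hw hsD htD hsw hwt
        obtain ⟨u, hu, v, hv, huv, hgapD', hallZ2⟩ := hnested
        have := gap_unique hu hv hgapD' hsD htD hgapD (hallZ2 w hw) ⟨hsw, hwt⟩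
        intro z hz
        exact ⟨this.1 ▸ (hallZ2 z hz).1, this.2 ▸ (hallZ2 z hz).2⟩
      · -- Z' avoids (s,t) entirely: then D is nested in Z' and obstructs the edge, contra
        exfalso
        push_neg at hw
        obtain ⟨z0, hz0⟩ := block_nonempty hπ.1 e.1
        have hz0b := hZbound z0 hz0
        have hz0g := hallZ z0 hz0
        have ha2s : a2 < s := by
          have h1 : a2 ≤ s := by
            by_contra hc
            push_neg at hc
            exact absurd (lt_trans hz0g.1 hz0b.2) (not_lt.mpr (hw a2 ha2 hc))
          exact lt_of_le_of_ne h1 (fun he => hdisj a2 ha2 (he ▸ hsD))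
        have hb2t : t < b2 := by
          have h1 : t ≤ b2 := by
            by_contra hc
            push_neg at hc
            exact absurd hc (not_lt.mpr (hw b2 hb2 (lt_trans hz0b.1 hz0g.2)))
          exact lt_of_le_of_ne h1 (fun he => hdisj b2 hb2 (he ▸ htD))
        have hDZ' : NestedIn D Z' :=
          nested_of_enters (block_disj hπ.1 hD e.2.1 (Ne.symm (hZD Z' hZ'cls)))
            (hnc2 Z' hZ'cls) hsD ha2 hb2 ha2s (lt_trans hst hb2t)
        have hZD' : NestedIn Z D := ⟨s, hsD, t, htD, hst, hgapD, hZbound⟩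
        obtain ⟨z', hz'⟩ := block_nonempty hπ.1 e.2.1
        have := e'.2.2.2 D hD hDZ' hZD' z' hz' j hj
        rw [cls_color hπ hA1 hZ'cls hP z' hz' i hi] at this
        rcases this with h | h
        · exact hgoal.1 h
        · exact hgoal.2 h
  have gen : ∀ W, Relation.TransGen (Rel G c π) X W →
      W ∈ cls G c π A1 ∧ ∀ z ∈ W, s < z ∧ z < t := by
    intro W h
    induction h with
    | single e => exact closure X _ ⟨hX, hallX⟩ e
    | tail h1 e ih => exact closure _ _ ih e
  have hPX : Relation.TransGen (Rel G c π) X P := by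
    have hs : SameCls G c π P X := sameCls_trans (sameCls_symm hP.2) hX.2
    rcases hs with hs | hs
    · exact absurd hs hne
    · exact transGen_symm hs
  exact absurd ((gen P hPX).2 a haP).1 (not_lt.mpr (le_of_lt (hallD s hsD).1))

end P0Lemma
namespace P0Lemma
open Relation

variable {V : Type} {k : ℕ} {G : Bigraph V} {c : Fin k → V} {π : Set (Set (Fin k))}

lemma mem_cls_of_inter (hπ : MemP G c π) {A1 X : Set (Fin k)} (hX : X ∈ π)
    {u : Fin k} (hu : u ∈ X) (hu' : u ∈ ⋃₀ cls G c π A1) : X ∈ cls G c π A1 := by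
  obtain ⟨Y, hYcls, huY⟩ := hu'
  exact (block_eq hπ.1 hX hYcls.1 hu huY) ▸ hYcls

lemma sStar_partition (hπ : MemP G c π) : Setoid.IsPartition (sigmaStar G c π) := by
  constructor
  · rintro ⟨A1, hA1, hem⟩
    obtain ⟨a, ha⟩ := block_nonempty hπ.1 hA1
    have : a ∈ ⋃₀ cls G c π A1 := ⟨A1, cls_self hA1, ha⟩
    rw [← hem] at this
    exact this
  · intro a
    obtain ⟨A, hA, haA⟩ := mem_block hπ.1 a
    refine ⟨⋃₀ cls G c π A, ⟨⟨A, hA, rfl⟩, ⟨A, cls_self hA, haA⟩⟩, ?_⟩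
    rintro S ⟨⟨A', hA', rfl⟩, haS⟩
    obtain ⟨Y, hYcls, haY⟩ := haS
    have hYA : Y = A := block_eq hπ.1 hYcls.1 hA haY haA
    have : A ∈ cls G c π A' := hYA ▸ hYcls
    rw [cls_eq_of_mem (cls_self hA) this]

lemma sStar_mono (hπ : MemP G c π) : Monochromatic c (sigmaStar G c π) := by
  rintro S ⟨A1, hA1, rfl⟩ x hx y hy
  obtain ⟨X, hXcls, hxX⟩ := hx
  obtain ⟨Y, hYcls, hyY⟩ := hy
  exact cls_color hπ hA1 hXcls hYcls x hxX y hyY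

lemma sStar_E1 (hπ : MemP G c π) :
    ∀ i1 x i2 : Fin k, i1 < x → x < i2 → SameBlock (sigmaStar G c π) i1 i2 →
      (c i1, c x) ∈ G.E1 := by
  intro i1 x i2 h1 h2 hsb
  obtain ⟨S, hS, hi1, hi2⟩ := hsb
  obtain ⟨A1, hA1, rfl⟩ := hS
  obtain ⟨A0, hA0, m, M, hm, hM, hhull⟩ := cls_top hπ hA1
  have hb1 := hhull i1 hi1
  have hb2 := hhull i2 hi2
  have h3 : m < x := lt_of_le_of_lt hb1.1 h1
  have h4 : x < M := lt_of_lt_of_le h2 hb2.2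
  have := hπ.2.2.1 m x M h3 h4 ⟨A0, hA0.1, hm, hM⟩
  have hcol : c m = c i1 := by
    obtain ⟨X, hXcls, hi1X⟩ := hi1
    exact cls_color hπ hA1 hA0 hXcls m hm i1 hi1X
  rwa [hcol] at this

end P0Lemma
namespace P0Lemma
open Relation

variable {V : Type} {k : ℕ} {G : Bigraph V} {c : Fin k → V} {π : Set (Set (Fin k))}

/-- The walk: if a block of the class of `A1` is nested in the top block `A0'` of a
different class whose hull is contained in the hull of the class of `A1`, then the two
class colors are `E2`-related. -/
lemma G1side (hπ : MemP G c π) {A1 A1' : Set (Fin k)} (hA1 : A1 ∈ π) (hA1' : A1' ∈ π)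
    (hdiff : ∀ Z, Z ∈ cls G c π A1 → Z ∈ cls G c π A1' → False)
    (hnc2 : ∀ Z ∈ cls G c π A1, ∀ Y ∈ cls G c π A1', ¬ Crossing Z Y)
    {A0 : Set (Fin k)} (hA0 : A0 ∈ cls G c π A1) {m M : Fin k} (hm : m ∈ A0) (hM : M ∈ A0)
    (hhull : ∀ x ∈ ⋃₀ cls G c π A1, m ≤ x ∧ x ≤ M)
    {A0' : Set (Fin k)} (hA0' : A0' ∈ cls G c π A1') {m' M' : Fin k}
    (hm' : m' ∈ A0') (hM' : M' ∈ A0')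
    (hhull' : ∀ x ∈ ⋃₀ cls G c π A1', m' ≤ x ∧ x ≤ M')
    (hsub : m ≤ m')
    {X : Set (Fin k)} (hX : X ∈ cls G c π A1) (hnX : NestedIn X A0') :
    (c m, c m') ∈ G.E2 := by
  obtain ⟨x0, hx0⟩ := block_nonempty hπ.1 hX.1
  have main : ∀ n : ℕ, ∀ X : Set (Fin k), X ∈ cls G c π A1 → NestedIn X A0' →
      (∃ x ∈ X, (x : ℕ) ≤ n) → (c m, c m') ∈ G.E2 := by
    intro n
    induction n using Nat.strong_induction_on with
    | _ n ih =>
    rintro X hX hnX ⟨x0, hx0, hx0n⟩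
    obtain ⟨s, hsA0', t, htA0', hst, hgapA0', hallX⟩ := hnX
    have hm's : m' ≤ s := (hhull' s ⟨A0', hA0', hsA0'⟩).1
    have htM' : t ≤ M' := (hhull' t ⟨A0', hA0', htA0'⟩).2
    -- X is not the top block A0
    have hXA0 : X ≠ A0 := by
      intro he
      have := (hallX m (he ▸ hm)).1
      exact absurd (lt_of_le_of_lt (le_trans hsub hm's) this) (lt_irrefl m)
    -- parent of X in its class
    obtain ⟨P, hP, hPX, hnXP, hmin⟩ := parent_block (cls_partOn hπ hA1) (cls_nc hπ hA1)
      hA0 hm hM hhull hX hXA0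
    have hPA0' : P ≠ A0' := fun he => hdiff P hP (he ▸ hA0')
    have hdisjP : ∀ x ∈ P, x ∉ A0' := block_disj hπ.1 hP.1 hA0'.1 hPA0'
    have hncP : ¬ Crossing A0' P := fun h => hnc2 P hP A0' hA0' (crossing_comm.mp h)
    obtain ⟨a, haP, b, hbP, hab, hgapP, hallXP⟩ := hnXP
    by_cases hz : ∃ z ∈ P, m' < z ∧ z < M'
    · -- P enters the hull of A0': recurse on P
      obtain ⟨z, hzP, hz1, hz2⟩ := hz
      have hnPA0' : NestedIn P A0' := nested_of_enters hdisjP hncP hzP hm' hM' hz1 hz2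
      have hax0 : a < x0 := (hallXP x0 hx0).1
      exact ih (a : ℕ) (lt_of_lt_of_le hax0 hx0n) P hP hnPA0' ⟨a, haP, le_refl _⟩
    · -- P avoids the hull of A0'
      push_neg at hz
      have hsx0 : s < x0 := (hallX x0 hx0).1
      have hx0t : x0 < t := (hallX x0 hx0).2
      have hax0 : a < x0 := (hallXP x0 hx0).1
      have hx0b : x0 < b := (hallXP x0 hx0).2
      have ham' : a < m' := by
        have h1 : a ≤ m' := by
          by_contra hc
          push_neg at hc
          exact absurd (lt_trans hax0 (lt_of_lt_of_le hx0t htM')) (not_lt.mpr (hz a haP hc))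
        exact lt_of_le_of_ne h1 (fun he => hdisjP a haP (he ▸ hm'))
      have hM'b : M' < b := by
        have h1 : M' ≤ b := hz b hbP (lt_of_le_of_lt hm's (lt_trans hsx0 hx0b))
        exact lt_of_le_of_ne h1 (fun he => hdisjP b hbP (he.symm ▸ hM'))
      have hnA0'P : NestedIn A0' P := by
        refine ⟨a, haP, b, hbP, hab, hgapP, fun y hy => ?_⟩
        have hb := hhull' y ⟨A0', hA0', hy⟩
        exact ⟨lt_of_lt_of_le ham' hb.1, lt_of_le_of_lt hb.2 hM'b⟩
      have hnXA0' : NestedIn X A0' := ⟨s, hsA0', t, htA0', hst, hgapA0', hallX⟩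
      have hnXP2 : NestedIn X P := ⟨a, haP, b, hbP, hab, hgapP, hallXP⟩
      have hPrec : PrecUn G c π P X := claimC hπ hA1 hP hX hPX hnXP2
      have key := hPrec.2.2.2 A0' hA0'.1 hnA0'P hnXA0' a haP m' hm'
      rcases key with key | key
      · have : c a = c m := cls_color hπ hA1 hP hA0 a haP m hm
        rwa [this] at key
      · -- same colors: then P and A0' would be in the same class, contradiction
        exfalso
        have hPrec2 : PrecUn G c π P A0' := by
          refine ⟨hPA0', ?_, hnA0'P, ?_⟩
          · intro i hi j hj
            calc c i = c a := hπ.2.1 P hP.1 i hi a haP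
            _ = c m' := key
            _ = c j := hπ.2.1 A0' hA0'.1 m' hm' j hj
          · intro D hD hnDP hnA0'D i hi j hj
            obtain ⟨e, heD, f, hfD, hef, hgapD, hallA0'⟩ := hnA0'D
            have hnXD : NestedIn X D := by
              refine ⟨e, heD, f, hfD, hef, hgapD, fun x hx => ?_⟩
              exact ⟨lt_trans (hallA0' s hsA0').1 (hallX x hx).1,
                lt_trans (hallX x hx).2 (hallA0' t htA0').2⟩
            exact hPrec.2.2.2 D hD hnDP hnXD i hi j hj
        have hrel : Rel G c π P A0' := ⟨hP.1, hA0'.1, Or.inl hPrec2⟩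
        have : A0' ∈ cls G c π A1 :=
          ⟨hA0'.1, sameCls_trans hP.2 (Or.inr (Relation.TransGen.single hrel))⟩
        exact hdiff A0' this hA0'
  exact main (x0 : ℕ) X hX hnX ⟨x0, hx0, le_refl _⟩

/-- The crossing condition for `sigmaStar`. -/
lemma sStar_E2 (hπ : MemP G c π) :
    ∀ i1 j1 i2 j2 : Fin k, i1 < j1 → j1 < i2 → i2 < j2 →
      SameBlock (sigmaStar G c π) i1 i2 → SameBlock (sigmaStar G c π) j1 j2 →
      ¬ SameBlock (sigmaStar G c π) i1 j1 → (c i2, c j1) ∈ G.E2 := by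
  intro i1 j1 i2 j2 h1 h2 h3 hb1 hb2 hne
  obtain ⟨S, hS, hi1, hi2⟩ := hb1
  obtain ⟨S', hS', hj1, hj2⟩ := hb2
  obtain ⟨A1, hA1, rfl⟩ := hS
  obtain ⟨A1', hA1', rfl⟩ := hS'
  have hdiff : ∀ Z, Z ∈ cls G c π A1 → Z ∈ cls G c π A1' → False := by
    intro Z hZ hZ'
    exact hne ⟨⋃₀ cls G c π A1, ⟨A1, hA1, rfl⟩, hi1,
      (cls_eq_of_mem hZ hZ') ▸ hj1⟩
  -- colors of the two classes
  obtain ⟨Xi, hXi, hi2X⟩ := hi2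
  obtain ⟨Yj, hYj, hj1Y⟩ := hj1
  by_cases hcr : ∃ Z ∈ cls G c π A1, ∃ Y ∈ cls G c π A1', Crossing Z Y
  · obtain ⟨Z, hZ, Y, hY, hcross⟩ := hcr
    obtain ⟨z0, hz0⟩ := block_nonempty hπ.1 hZ.1
    obtain ⟨y0, hy0⟩ := block_nonempty hπ.1 hY.1
    have := crossE2 hπ hZ.1 hY.1 (fun he => hdiff Z hZ (he ▸ hY)) hcross hz0 hy0
    have e1 : c z0 = c i2 := cls_color hπ hA1 hZ hXi z0 hz0 i2 hi2X
    have e2 : c y0 = c j1 := cls_color hπ hA1' hY hYj y0 hy0 j1 hj1Y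
    rwa [e1, e2] at this
  · push_neg at hcr
    have hnc2 : ∀ Z ∈ cls G c π A1, ∀ Y ∈ cls G c π A1', ¬ Crossing Z Y := hcr
    obtain ⟨A0, hA0, m, M, hm, hM, hhull⟩ := cls_top hπ hA1
    obtain ⟨A0', hA0', m', M', hm', hM', hhull'⟩ := cls_top hπ hA1'
    have hdisj : ∀ x ∈ A0', x ∉ A0 :=
      block_disj hπ.1 hA0'.1 hA0.1 (fun he => hdiff A0' (he ▸ hA0) hA0')
    have hj1U' : j1 ∈ ⋃₀ cls G c π A1' := ⟨Yj, hYj, hj1Y⟩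
    have hi2U : i2 ∈ ⋃₀ cls G c π A1 := ⟨Xi, hXi, hi2X⟩
    have hi1U : i1 ∈ ⋃₀ cls G c π A1 := hi1
    have hj2U' : j2 ∈ ⋃₀ cls G c π A1' := hj2
    have hminA0 : ∀ x ∈ A0, m ≤ x := fun x hx => (hhull x ⟨A0, hA0, hx⟩).1
    have hmaxA0 : ∀ x ∈ A0, x ≤ M := fun x hx => (hhull x ⟨A0, hA0, hx⟩).2
    have hminA0' : ∀ x ∈ A0', m' ≤ x := fun x hx => (hhull' x ⟨A0', hA0', hx⟩).1
    have hmaxA0' : ∀ x ∈ A0', x ≤ M' := fun x hx => (hhull' x ⟨A0', hA0', hx⟩).2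
    have hcomp := hull_comp hdisj (hnc2 A0 hA0 A0' hA0')
      hm hM hminA0 hmaxA0 hm' hM' hminA0' hmaxA0'
      (le_trans (hhull i1 hi1U).1 (le_of_lt h1)) (le_trans (le_of_lt h2) (hhull i2 hi2U).2)
      (hhull' j1 hj1U').1 (hhull' j1 hj1U').2
    have e1 : c m = c i2 := cls_color hπ hA1 hA0 hXi m hm i2 hi2X
    have e2 : c m' = c j1 := cls_color hπ hA1' hA0' hYj m' hm' j1 hj1Y
    rcases hcomp with ⟨hc1, hc2⟩ | ⟨hc1, hc2⟩
    · -- hull of A0' inside hull of A0; i2 is strictly inside hull of A0'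
      have hXiA0' : Xi ≠ A0' := fun he => hdiff Xi hXi (he ▸ hA0')
      have hnX : NestedIn Xi A0' := by
        refine nested_of_enters (block_disj hπ.1 hXi.1 hA0'.1 hXiA0')
          (fun h => hnc2 Xi hXi A0' hA0' (crossing_comm.mp h)) hi2X hm' hM'
          (lt_of_le_of_lt (hhull' j1 hj1U').1 h2)
          (lt_of_lt_of_le h3 (hhull' j2 hj2U').2)
      have := G1side hπ hA1 hA1' hdiff hnc2 hA0 hm hM hhull hA0' hm' hM' hhull' hc1
        hXi hnX
      rwa [e1, e2] at this
    · -- hull of A0 inside hull of A0'; j1 is strictly inside hull of A0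
      have hdiff' : ∀ Z, Z ∈ cls G c π A1' → Z ∈ cls G c π A1 → False :=
        fun Z hZ hZ' => hdiff Z hZ' hZ
      have hnc2' : ∀ Z ∈ cls G c π A1', ∀ Y ∈ cls G c π A1, ¬ Crossing Z Y :=
        fun Z hZ Y hY h => hnc2 Y hY Z hZ (crossing_comm.mp h)
      have hYjA0 : Yj ≠ A0 := fun he => hdiff Yj (he ▸ hA0) hYj
      have hnY : NestedIn Yj A0 := by
        refine nested_of_enters (block_disj hπ.1 hYj.1 hA0.1 hYjA0)
          (fun h => hnc2' Yj hYj A0 hA0 (crossing_comm.mp h)) hj1Y hm hM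
          (lt_of_le_of_lt (hhull i1 hi1U).1 h1)
          (lt_of_lt_of_le h2 (hhull i2 hi2U).2)
      have := G1side hπ hA1' hA1 hdiff' hnc2' hA0' hm' hM' hhull' hA0 hm hM hhull hc1
        hYj hnY
      rw [e1, e2] at this
      exact G.symm2 _ _ this
end P0Lemma
namespace P0Lemma
open Relation

variable {V : Type} {k : ℕ} {G : Bigraph V} {c : Fin k → V} {π : Set (Set (Fin k))}

lemma sStar_memP (hπ : MemP G c π) : MemP G c (sigmaStar G c π) :=
  ⟨sStar_partition hπ, sStar_mono hπ, sStar_E1 hπ, sStar_E2 hπ⟩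

/-- variant of `parent_block` for an external set `X`. -/
lemma parent_block' {S : Set (Fin k)} {Q : Set (Set (Fin k))}
    (hp : PartOn S Q) (hnc : NonCrossingPart Q)
    {A0 : Set (Fin k)} (hA0 : A0 ∈ Q) {m M : Fin k}
    (hm : m ∈ A0) (hM : M ∈ A0)
    {X : Set (Fin k)} (hXne : X.Nonempty)
    (hXd : ∀ Z ∈ Q, ∀ x ∈ X, x ∉ Z)
    (hXnc : ∀ Z ∈ Q, ¬ Crossing Z X)
    (hXb : ∀ x ∈ X, m < x ∧ x < M) :
    ∃ P ∈ Q, NestedIn X P ∧ (∀ Z ∈ Q, NestedIn Z P → NestedIn X Z → False) := by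
  classical
  set T : Set (Fin k) :=
    {a : Fin k | ∃ Z ∈ Q, a ∈ Z ∧ (∀ x ∈ X, a < x) ∧ ∃ b ∈ Z, ∀ x ∈ X, x < b} with hT
  have hmT : m ∈ T :=
    ⟨A0, hA0, hm, fun x hx => (hXb x hx).1, M, hM, fun x hx => (hXb x hx).2⟩
  obtain ⟨a, haT, hamax⟩ := exmax T ⟨m, hmT⟩
  obtain ⟨P, hPQ, haP, halow, b, hbP, hbhigh⟩ := haT
  obtain ⟨x0, hx0⟩ := hXne
  refine ⟨P, hPQ, ?_, ?_⟩
  · exact nested_of_enters (fun x hx => hXd P hPQ x hx) (hXnc P hPQ)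
      hx0 haP hbP (halow x0 hx0) (hbhigh x0 hx0)
  · intro Z hZQ h1 h2
    obtain ⟨i2, hi2, j2, hj2, _, _, hall2⟩ := h2
    obtain ⟨i3, hi3, j3, hj3, _, hgap3, hall3⟩ := h1
    have hi2T : i2 ∈ T :=
      ⟨Z, hZQ, hi2, fun x hx => (hall2 x hx).1, j2, hj2, fun x hx => (hall2 x hx).2⟩
    have hi2a : i2 ≤ a := hamax i2 hi2T
    have hi3i2 : i3 < i2 := (hall3 i2 hi2).1
    rcases le_or_gt a i3 with h | h
    · exact absurd (le_trans hi2a h) (not_le.mpr hi3i2)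
    · have hj3a : j3 ≤ a := by
        by_contra hc
        push_neg at hc
        exact hgap3 a haP ⟨h, hc⟩
      have : x0 < a := lt_of_lt_of_le (lt_trans (hall2 x0 hx0).2 (hall3 j2 hj2).2) hj3a
      exact absurd (halow x0 hx0) (not_lt.mpr (le_of_lt this))

lemma sStar_res (hπ : MemP G c π) {A1 : Set (Fin k)} (hA1 : A1 ∈ π) :
    {A | A ∈ π ∧ A ⊆ ⋃₀ cls G c π A1} = cls G c π A1 := by
  ext A
  constructor
  · rintro ⟨hA, hsub⟩
    obtain ⟨a, ha⟩ := block_nonempty hπ.1 hA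
    exact mem_cls_of_inter hπ hA ha (hsub ha)
  · intro hA
    exact ⟨hA.1, Set.subset_sUnion_of_mem hA⟩

lemma sStar_irr (hπ : MemP G c π) {A1 : Set (Fin k)} (hA1 : A1 ∈ π) :
    IrreducibleOn (cls G c π A1) := by
  obtain ⟨A0, hA0, m, M, hm, hM, hhull⟩ := cls_top hπ hA1
  exact irr_of_top hA0 hm hM (fun A hA x hx => hhull x ⟨A, hA, hx⟩)

/-- `sigmaStar` has no unobstructed nestings. -/
lemma sStar_P0 (hπ : MemP G c π) :
    ∀ U ∈ sigmaStar G c π, ∀ U' ∈ sigmaStar G c π,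
      ¬ PrecUn G c (sigmaStar G c π) U U' := by
  have hσ := sStar_memP hπ
  rintro U ⟨A1, hA1, rfl⟩ U' ⟨A1', hA1', rfl⟩ ⟨hneq, hcol, hnest, hclause⟩
  have hdiff : ∀ Z, Z ∈ cls G c π A1 → Z ∈ cls G c π A1' → False := by
    intro Z hZ hZ'
    exact hneq (by rw [cls_eq_of_mem hZ hZ'])
  have hnc2 : ∀ Z ∈ cls G c π A1, ∀ Y ∈ cls G c π A1', ¬ Crossing Z Y := by
    intro Z hZ Y hY
    refine noncross_mono hπ hZ.1 hY.1 (fun he => hdiff Z hZ (he ▸ hY)) ?_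
    intro x hx y hy
    exact hcol x ⟨Z, hZ, hx⟩ y ⟨Y, hY, hy⟩
  obtain ⟨A0, hA0, m, M, hm, hM, hhull⟩ := cls_top hπ hA1
  obtain ⟨A0', hA0', m', M', hm', hM', hhull'⟩ := cls_top hπ hA1'
  obtain ⟨g, hgU, gg, hggU, hggap, hgapU, hallU'⟩ := hnest
  -- A0' is strictly inside the hull of the class of A1
  have hA0'b : ∀ y ∈ A0', m < y ∧ y < M := by
    intro y hy
    have h1 := hallU' y ⟨A0', hA0', hy⟩
    exact ⟨lt_of_le_of_lt (hhull g hgU).1 h1.1, lt_of_lt_of_le h1.2 (hhull gg hggU).2⟩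
  obtain ⟨P, hP, hnA0'P, hmin⟩ := parent_block' (cls_partOn hπ hA1) (cls_nc hπ hA1)
    hA0 hm hM (block_nonempty hπ.1 hA0'.1)
    (fun Z hZ x hx => block_disj hπ.1 hA0'.1 hZ.1 (fun he => hdiff A0' (he ▸ hZ) hA0') x hx)
    (fun Z hZ => hnc2 Z hZ A0' hA0') hA0'b
  have hPA0' : P ≠ A0' := fun he => hdiff P hP (he ▸ hA0')
  -- build PrecUn π P A0'
  obtain ⟨a3, ha3, b3, hb3, hab3, hgap3, hallA0'3⟩ := hnA0'P
  have hPrec : PrecUn G c π P A0' := by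
    refine ⟨hPA0', ?_, ⟨a3, ha3, b3, hb3, hab3, hgap3, hallA0'3⟩, ?_⟩
    · intro i hi j hj
      exact hcol i ⟨P, hP, hi⟩ j ⟨A0', hA0', hj⟩
    · intro D hD hnDP hnA0'D i hi j hj
      by_cases hDc1 : D ∈ cls G c π A1
      · exact (hmin D hDc1 hnDP hnA0'D).elim
      by_cases hDc2 : D ∈ cls G c π A1'
      · exact Or.inr (hcol i ⟨P, hP, hi⟩ j ⟨D, hDc2, hj⟩)
      -- D belongs to a third sigmaStar block
      have hUD : ⋃₀ cls G c π D ∈ sigmaStar G c π := ⟨D, hD, rfl⟩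
      have hUmem : ⋃₀ cls G c π A1 ∈ sigmaStar G c π := ⟨A1, hA1, rfl⟩
      have hU'mem : ⋃₀ cls G c π A1' ∈ sigmaStar G c π := ⟨A1', hA1', rfl⟩
      have hDsub : D ⊆ ⋃₀ cls G c π D := Set.subset_sUnion_of_mem (cls_self hD)
      have hUDU : ⋃₀ cls G c π D ≠ ⋃₀ cls G c π A1 := by
        intro he
        obtain ⟨d, hd⟩ := block_nonempty hπ.1 hD
        exact hDc1 (mem_cls_of_inter hπ hD hd (he ▸ hDsub hd))
      have hUDU' : ⋃₀ cls G c π D ≠ ⋃₀ cls G c π A1' := by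
        intro he
        obtain ⟨d, hd⟩ := block_nonempty hπ.1 hD
        exact hDc2 (mem_cls_of_inter hπ hD hd (he ▸ hDsub hd))
      obtain ⟨a2, ha2, b2, hb2, hab2, hgap2, hallA0'2⟩ := hnA0'D
      obtain ⟨d0, hd0⟩ := block_nonempty hπ.1 hD
      obtain ⟨e3, he3, f3, hf3, hef3, hgapP3, hallD3⟩ := hnDP
      have hiU : i ∈ ⋃₀ cls G c π A1 := ⟨P, hP, hi⟩
      have hjUD : j ∈ ⋃₀ cls G c π D := hDsub hj
      by_cases hcrU : Crossing (⋃₀ cls G c π A1) (⋃₀ cls G c π D)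
      · exact Or.inl (crossE2 hσ hUmem hUD (Ne.symm hUDU) hcrU hiU hjUD)
      have hdisjUDU : ∀ x ∈ ⋃₀ cls G c π D, x ∉ ⋃₀ cls G c π A1 :=
        block_disj (sStar_partition hπ) hUD hUmem hUDU
      have hnUDU : NestedIn (⋃₀ cls G c π D) (⋃₀ cls G c π A1) :=
        nested_of_enters hdisjUDU hcrU (hDsub hd0) ⟨P, hP, he3⟩ ⟨P, hP, hf3⟩
          (hallD3 d0 hd0).1 (hallD3 d0 hd0).2
      have hm'U' : m' ∈ ⋃₀ cls G c π A1' := ⟨A0', hA0', hm'⟩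
      by_cases hcrU' : Crossing (⋃₀ cls G c π A1') (⋃₀ cls G c π D)
      · have hthis := crossE2 hσ hU'mem hUD (Ne.symm hUDU') hcrU' hm'U' hjUD
        have e1 : c i = c m' := hcol i hiU m' hm'U'
        refine Or.inl ?_
        rw [e1]
        exact hthis
      · have hdisjU'UD : ∀ x ∈ ⋃₀ cls G c π A1', x ∉ ⋃₀ cls G c π D :=
          block_disj (sStar_partition hπ) hU'mem hUD (Ne.symm hUDU')
        have hncc : ¬ Crossing (⋃₀ cls G c π D) (⋃₀ cls G c π A1') :=
          fun hx => hcrU' (crossing_comm.mp hx)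
        have hnU'UD : NestedIn (⋃₀ cls G c π A1') (⋃₀ cls G c π D) :=
          nested_of_enters hdisjU'UD hncc hm'U' (hDsub ha2) (hDsub hb2)
            (hallA0'2 m' hm').1 (hallA0'2 m' hm').2
        exact hclause _ hUD hnUDU hnU'UD i hiU j hjUD
  have hrel : Rel G c π P A0' := ⟨hP.1, hA0'.1, Or.inl hPrec⟩
  exact hdiff A0' ⟨hA0'.1, sameCls_trans hP.2 (Or.inr (Relation.TransGen.single hrel))⟩ hA0'

end P0Lemma
namespace P0Lemma
open Relation

variable {V : Type} {k : ℕ}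

def Valid (G : Bigraph V) (c : Fin k → V) (π σ : Set (Set (Fin k))) : Prop :=
  MemP0 G c σ ∧
  (∀ B ∈ σ, PartOn B {A | A ∈ π ∧ A ⊆ B} ∧ NonCrossingPart {A | A ∈ π ∧ A ⊆ B} ∧
    IrreducibleOn {A | A ∈ π ∧ A ⊆ B}) ∧
  (∀ A ∈ π, ∃ B ∈ σ, A ⊆ B)

variable {G : Bigraph V} {c : Fin k → V} {π : Set (Set (Fin k))}

/-- (b1): blocks of `π` that are unobstructedly nested lie in the same block
of any valid coarsening. -/
lemma uniq_b1 (hπ : MemP G c π) {σ : Set (Set (Fin k))} (hσ : Valid G c π σ)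
    {A A' : Set (Fin k)} (hA : A ∈ π) (hA' : A' ∈ π) (hprec : PrecUn G c π A A')
    {B1 B2 : Set (Fin k)} (hB1 : B1 ∈ σ) (hB2 : B2 ∈ σ)
    (hsub1 : A ⊆ B1) (hsub2 : A' ⊆ B2) : B1 = B2 := by
  by_contra hne
  have hp : MemP G c σ := hσ.1.1
  obtain ⟨a0, ha0⟩ := block_nonempty hπ.1 hA
  obtain ⟨mA', hmA'A', hminA'⟩ := exmin A' (block_nonempty hπ.1 hA')
  have hcolB : ∀ x ∈ B1, ∀ y ∈ B2, c x = c y := by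
    intro x hx y hy
    calc c x = c a0 := hp.2.1 B1 hB1 x hx a0 (hsub1 ha0)
    _ = c mA' := hprec.2.1 a0 ha0 mA' hmA'A'
    _ = c y := hp.2.1 B2 hB2 mA' (hsub2 hmA'A') y hy
  have hncB : ¬ Crossing B1 B2 := noncross_mono hp hB1 hB2 hne hcolB
  obtain ⟨i, hiA, j, hjA, hij, hgapA, hallA'⟩ := hprec.2.2.1
  have hnB2B1 : NestedIn B2 B1 :=
    nested_of_enters (block_disj hp.1 hB2 hB1 (Ne.symm hne)) hncB
      (hsub2 hmA'A') (hsub1 hiA) (hsub1 hjA) (hallA' mA' hmA'A').1 (hallA' mA' hmA'A').2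
  have hnp := hσ.1.2 B1 hB1 B2 hB2
  have hcl : ¬ (∀ B'' ∈ σ, NestedIn B'' B1 → NestedIn B2 B'' →
      ∀ x ∈ B1, ∀ y ∈ B'', (c x, c y) ∈ G.E2 ∨ c x = c y) :=
    fun hcl => hnp ⟨hne, hcolB, hnB2B1, hcl⟩
  push_neg at hcl
  obtain ⟨B'', hB''σ, hnB''B1, hnB2B'', i0, hi0, j0, hj0, hbad1, hbad2⟩ := hcl
  have hres := hσ.2.1 B'' hB''σ
  obtain ⟨A0'', hA0'', m'', M'', hm'', hM'', hhull''⟩ :=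
    top_of_irr hres.1 hres.2.1 hres.2.2 (block_nonempty hp.1 hB''σ)
  obtain ⟨a, haB1, b, hbB1, hab, hgapB1, hallB''⟩ := hnB''B1
  obtain ⟨s, hsB'', t, htB'', hst, hgapB'', hallB2⟩ := hnB2B''
  have has : a < s := (hallB'' s hsB'').1
  have hsmA' : s < mA' := (hallB2 mA' (hsub2 hmA'A')).1
  have hmA't : mA' < t := (hallB2 mA' (hsub2 hmA'A')).2
  have htb : t < b := (hallB'' t htB'').2
  -- B'' sits inside the gap (i,j) of A
  have hia : i ≤ a := by
    by_contra hc
    push_neg at hc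
    exact hgapB1 i (hsub1 hiA) ⟨hc, lt_trans (lt_trans (hallA' mA' hmA'A').1 hmA't) htb⟩
  have hbj : b ≤ j := by
    by_contra hc
    push_neg at hc
    exact hgapB1 j (hsub1 hjA)
      ⟨lt_trans (lt_trans has hsmA') (hallA' mA' hmA'A').2, hc⟩
  have hnA0''A : NestedIn A0'' A := by
    refine ⟨i, hiA, j, hjA, hij, hgapA, fun y hy => ?_⟩
    have hyB'' : y ∈ B'' := hA0''.2 hy
    exact ⟨lt_of_le_of_lt hia (hallB'' y hyB'').1,
      lt_of_lt_of_le (hallB'' y hyB'').2 hbj⟩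
  -- translate bad colors
  have hi0i : c i0 = c mA' := hcolB i0 hi0 mA' (hsub2 hmA'A')
  have hj0m : c j0 = c m'' := hp.2.1 B'' hB''σ j0 hj0 m'' (hA0''.2 hm'')
  -- disjointness of A' and A0''
  have hdisjA' : ∀ x ∈ A', x ∉ A0'' := by
    intro x hx hx'
    exact hgapB'' x (hA0''.2 hx') (hallB2 x (hsub2 hx))
  have hA'A0'' : A' ≠ A0'' := by
    intro he
    exact hdisjA' mA' hmA'A' (he ▸ hmA'A')
  by_cases hcrA : Crossing A' A0''
  · have := crossE2 hπ hA' hA0''.1 hA'A0'' hcrA hmA'A' hm''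
    rw [← hi0i, ← hj0m] at this
    exact hbad1 this
  · have hnA'A0'' : NestedIn A' A0'' := by
      refine nested_of_enters hdisjA' (fun h => hcrA (crossing_comm.mp h))
        hmA'A' hm'' hM'' ?_ ?_
      · exact lt_of_le_of_lt (hhull'' s hsB'').1 hsmA'
      · exact lt_of_lt_of_le hmA't (hhull'' t htB'').2
    have := hprec.2.2.2 A0'' hA0''.1 hnA0''A hnA'A0'' i hiA m'' hm''
    have hii0 : c i = c i0 := hp.2.1 B1 hB1 i (hsub1 hiA) i0 hi0
    rw [hii0, ← hj0m] at this
    rcases this with h | h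
    · exact hbad1 h
    · exact hbad2 h

/-- (b2): parent-child pairs inside a block of a valid coarsening are related in `π`. -/
lemma uniq_b2core (hπ : MemP G c π) {σ : Set (Set (Fin k))} (hσ : Valid G c π σ)
    {B : Set (Fin k)} (hB : B ∈ σ)
    {P X : Set (Fin k)} (hP : P ∈ π ∧ P ⊆ B) (hX : X ∈ π ∧ X ⊆ B)
    (hnest : NestedIn X P)
    (hmin : ∀ Z, (Z ∈ π ∧ Z ⊆ B) → NestedIn Z P → NestedIn X Z → False) :
    PrecUn G c π P X := by
  have hp : MemP G c σ := hσ.1.1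
  refine ⟨(Ne.symm (nested_ne hnest (block_nonempty hπ.1 hX.1))), ?_, hnest, ?_⟩
  · intro x hx y hy
    exact hp.2.1 B hB x (hP.2 hx) y (hX.2 hy)
  · intro D hD hnDP hnXD i hi j hj
    by_contra hg
    push_neg at hg
    by_cases hDB : D ⊆ B
    · exact hmin D ⟨hD, hDB⟩ hnDP hnXD
    obtain ⟨BD, hBD, hDBD⟩ := hσ.2.2 D hD
    have hBDB : B ≠ BD := by
      intro he
      exact hDB (he ▸ hDBD)
    obtain ⟨a3, ha3P, b3, hb3P, _, _, hallD⟩ := hnDP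
    obtain ⟨s, hsD, t, htD, _, _, hallX⟩ := hnXD
    obtain ⟨mX, hmX, _⟩ := exmin X (block_nonempty hπ.1 hX.1)
    have hcross : CrossingOne B BD :=
      ⟨a3, s, mX, t, (hallD s hsD).1, (hallX mX hmX).1, (hallX mX hmX).2,
        hP.2 ha3P, hX.2 hmX, hDBD hsD, hDBD htD⟩
    have := crossE2 hp hB hBD hBDB (Or.inl hcross) (hP.2 hi) (hDBD hj)
    exact hg.1 this

/-- any block of a valid coarsening is the union of the class of each of its `π`-blocks. -/
lemma valid_block_eq (hπ : MemP G c π) {σ : Set (Set (Fin k))} (hσ : Valid G c π σ)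
    {B : Set (Fin k)} (hB : B ∈ σ) {A1 : Set (Fin k)} (hA1 : A1 ∈ π) (hA1B : A1 ⊆ B) :
    B = ⋃₀ cls G c π A1 := by
  have hp : MemP G c σ := hσ.1.1
  have hres := hσ.2.1 B hB
  obtain ⟨A0, hA0, m, M, hm, hM, hhull⟩ :=
    top_of_irr hres.1 hres.2.1 hres.2.2 (block_nonempty hp.1 hB)
  -- claim 1: every π-block inside B is in the class of A0
  have claim1 : ∀ n : ℕ, ∀ X, (X ∈ π ∧ X ⊆ B) → (∃ x ∈ X, (x : ℕ) ≤ n) →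
      SameCls G c π A0 X := by
    intro n
    induction n using Nat.strong_induction_on with
    | _ n ih =>
    rintro X hX ⟨x0, hx0, hx0n⟩
    by_cases hXA0 : X = A0
    · exact Or.inl hXA0.symm
    obtain ⟨P, hPQ, hPX, hnXP, hmin⟩ := parent_block hres.1 hres.2.1
      hA0 hm hM hhull hX hXA0
    have hprec : PrecUn G c π P X := uniq_b2core hπ hσ hB hPQ hX hnXP hmin
    obtain ⟨a, haP, b, hbP, _, _, hallX⟩ := hnXP
    have ihP : SameCls G c π A0 P :=
      ih (a : ℕ) (lt_of_lt_of_le (hallX x0 hx0).1 hx0n) P hPQ ⟨a, haP, le_refl _⟩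
    exact sameCls_trans ihP
      (Or.inr (Relation.TransGen.single ⟨hPQ.1, hX.1, Or.inl hprec⟩))
  -- claim 2: every block of the class of A0 is inside B
  have claim2 : ∀ X, SameCls G c π A0 X → X ⊆ B := by
    have step : ∀ Y X, Y ∈ π → Y ⊆ B → Rel G c π Y X → X ⊆ B := by
      intro Y X hY hYB e
      obtain ⟨BX, hBX, hXBX⟩ := hσ.2.2 X e.2.1
      rcases e.2.2 with e' | e'
      · exact (uniq_b1 hπ hσ hY e.2.1 e' hB hBX hYB hXBX) ▸ hXBX
      · exact (uniq_b1 hπ hσ e.2.1 hY e' hBX hB hXBX hYB).symm ▸ hXBX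
    intro X hs
    rcases hs with hs | hs
    · exact hs ▸ hA0.2
    · induction hs with
      | single e => exact step A0 _ hA0.1 hA0.2 e
      | tail h1 e ih2 =>
        refine step _ _ ?_ ih2 e
        exact sameCls_mem hA0.1 (Or.inr h1)
  have hBA0 : B = ⋃₀ cls G c π A0 := by
    apply Set.eq_of_subset_of_subset
    · intro x hx
      obtain ⟨Ax, hAx, hxAx⟩ := mem_block hπ.1 x
      obtain ⟨Bx, hBx, hAxBx⟩ := hσ.2.2 Ax hAx
      have hBBx : B = Bx := block_eq hp.1 hB hBx hx (hAxBx hxAx)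
      have : SameCls G c π A0 Ax :=
        claim1 (x : ℕ) Ax ⟨hAx, hBBx ▸ hAxBx⟩ ⟨x, hxAx, le_refl _⟩
      exact ⟨Ax, ⟨hAx, this⟩, hxAx⟩
    · rintro x ⟨X, hXcls, hxX⟩
      exact claim2 X hXcls.2 hxX
  have hA1cls : A1 ∈ cls G c π A0 := by
    obtain ⟨a1, ha1⟩ := block_nonempty hπ.1 hA1
    exact ⟨hA1, claim1 (a1 : ℕ) A1 ⟨hA1, hA1B⟩ ⟨a1, ha1, le_refl _⟩⟩
  rw [hBA0, cls_eq_of_sameCls hA1cls.2]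

/-- uniqueness: a valid coarsening equals `sigmaStar`. -/
lemma valid_eq_sigmaStar (hπ : MemP G c π) {σ : Set (Set (Fin k))}
    (hσ : Valid G c π σ) : σ = sigmaStar G c π := by
  have hp : MemP G c σ := hσ.1.1
  ext B
  constructor
  · intro hB
    obtain ⟨x, hx⟩ := block_nonempty hp.1 hB
    obtain ⟨Ax, hAx, hxAx⟩ := mem_block hπ.1 x
    obtain ⟨Bx, hBx, hAxBx⟩ := hσ.2.2 Ax hAx
    have hBBx : B = Bx := block_eq hp.1 hB hBx hx (hAxBx hxAx)
    exact ⟨Ax, hAx, valid_block_eq hπ hσ hB hAx (hBBx ▸ hAxBx)⟩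
  · rintro ⟨A1, hA1, rfl⟩
    obtain ⟨B1, hB1, hA1B1⟩ := hσ.2.2 A1 hA1
    have := valid_block_eq hπ hσ hB1 hA1 hA1B1
    rw [← this]
    exact hB1

end P0Lemma
namespace P0Lemma
open Relation

variable {V : Type} {k : ℕ} {G : Bigraph V} {c : Fin k → V}

lemma mem_union_iff {σ : Set (Set (Fin k))} {f : Set (Fin k) → Set (Set (Fin k))}
    {A : Set (Fin k)} : A ∈ (⋃ B ∈ σ, f B) ↔ ∃ B ∈ σ, A ∈ f B := by
  simp

lemma union_memP {σ : Set (Set (Fin k))} {f : Set (Fin k) → Set (Set (Fin k))}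
    (h0 : MemP0 G c σ)
    (h1 : ∀ B ∈ σ, PartOn B (f B) ∧ NonCrossingPart (f B) ∧ IrreducibleOn (f B)) :
    MemP G c (⋃ B ∈ σ, f B) := by
  have hσ : MemP G c σ := h0.1
  refine ⟨⟨?_, ?_⟩, ?_, ?_, ?_⟩
  · -- ∅ not a block
    intro hmem
    obtain ⟨B, hB, hem⟩ := mem_union_iff.mp hmem
    exact (h1 B hB).1.1 hem
  · -- each point in a unique block
    intro a
    obtain ⟨B, hB, haB⟩ := mem_block hσ.1 a
    obtain ⟨A, ⟨hAf, haA⟩, hAu⟩ := (h1 B hB).1.2.2 a haB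
    refine ⟨A, ⟨mem_union_iff.mpr ⟨B, hB, hAf⟩, haA⟩, ?_⟩
    rintro A' ⟨hA'mem, haA'⟩
    obtain ⟨B', hB', hA'f⟩ := mem_union_iff.mp hA'mem
    have hBB' : B' = B :=
      block_eq hσ.1 hB' hB ((h1 B' hB').1.2.1 A' hA'f haA') haB
    exact hAu A' ⟨hBB' ▸ hA'f, haA'⟩
  · -- monochromatic
    intro A hA x hx y hy
    obtain ⟨B, hB, hAf⟩ := mem_union_iff.mp hA
    have hsub := (h1 B hB).1.2.1 A hAf
    exact hσ.2.1 B hB x (hsub hx) y (hsub hy)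
  · -- E1
    intro i1 x i2 hx1 hx2 hsb
    obtain ⟨A, hA, hi1, hi2⟩ := hsb
    obtain ⟨B, hB, hAf⟩ := mem_union_iff.mp hA
    have hsub := (h1 B hB).1.2.1 A hAf
    exact hσ.2.2.1 i1 x i2 hx1 hx2 ⟨B, hB, hsub hi1, hsub hi2⟩
  · -- E2
    intro i1 j1 i2 j2 h1' h2' h3' hb1 hb2 hne
    obtain ⟨A, hA, hi1, hi2⟩ := hb1
    obtain ⟨A', hA', hj1, hj2⟩ := hb2
    obtain ⟨B, hB, hAf⟩ := mem_union_iff.mp hA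
    obtain ⟨B', hB', hA'f⟩ := mem_union_iff.mp hA'
    have hsub := (h1 B hB).1.2.1 A hAf
    have hsub' := (h1 B' hB').1.2.1 A' hA'f
    by_cases hBB' : B = B'
    · -- crossing within one block of σ: contradiction with non-crossing
      exfalso
      have hAA' : A ≠ A' := by
        intro he
        exact hne ⟨A, hA, hi1, he ▸ hj1⟩
      exact (h1 B hB).2.1 A hAf A' (hBB' ▸ hA'f) hAA'
        (Or.inl ⟨i1, j1, i2, j2, h1', h2', h3', hi1, hi2, hj1, hj2⟩)
    · exact hσ.2.2.2 i1 j1 i2 j2 h1' h2' h3' ⟨B, hB, hsub hi1, hsub hi2⟩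
        ⟨B', hB', hsub' hj1, hsub' hj2⟩
        (not_sameBlock hσ.1 hB hB' hBB' (hsub hi1) (hsub' hj1))

lemma res_eq {σ : Set (Set (Fin k))} {f : Set (Fin k) → Set (Set (Fin k))}
    (h0 : MemP0 G c σ)
    (h1 : ∀ B ∈ σ, PartOn B (f B) ∧ NonCrossingPart (f B) ∧ IrreducibleOn (f B))
    {B : Set (Fin k)} (hB : B ∈ σ) :
    f B = {A | A ∈ (⋃ B' ∈ σ, f B') ∧ A ⊆ B} := by
  ext A
  constructor
  · intro hAf
    exact ⟨mem_union_iff.mpr ⟨B, hB, hAf⟩, (h1 B hB).1.2.1 A hAf⟩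
  · rintro ⟨hAmem, hAB⟩
    obtain ⟨B', hB', hAf'⟩ := mem_union_iff.mp hAmem
    have hAne : A.Nonempty := partOn_nonempty (h1 B' hB').1 hAf'
    obtain ⟨a, ha⟩ := hAne
    have : B' = B := block_eq h0.1.1 hB' hB ((h1 B' hB').1.2.1 A hAf' ha) (hAB ha)
    exact this ▸ hAf'

lemma valid_of_dom {σ : Set (Set (Fin k))} {f : Set (Fin k) → Set (Set (Fin k))}
    (h0 : MemP0 G c σ)
    (h1 : ∀ B ∈ σ, PartOn B (f B) ∧ NonCrossingPart (f B) ∧ IrreducibleOn (f B)) :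
    Valid G c (⋃ B ∈ σ, f B) σ := by
  refine ⟨h0, ?_, ?_⟩
  · intro B hB
    have := h1 B hB
    rwa [res_eq h0 h1 hB] at this
  · intro A hA
    obtain ⟨B, hB, hAf⟩ := mem_union_iff.mp hA
    exact ⟨B, hB, (h1 B hB).1.2.1 A hAf⟩

end P0Lemma

open P0Lemma

/-- Lemma 2.24: the map `Φ` sending a pair `(σ, (π_B)_{B ∈ σ})`, where `σ ∈ P(c,G)⁰`
and each `π_B` is an irreducible non-crossing partition of the block `B`, to
`⋃_{B ∈ σ} π_B`, is a bijection onto `P(c,G)`. -/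
theorem P0_decomposition_bijection {V : Type} {k : ℕ} (G : Bigraph V) (c : Fin k → V) :
    Set.BijOn
      (fun p : Set (Set (Fin k)) × (Set (Fin k) → Set (Set (Fin k))) => ⋃ B ∈ p.1, p.2 B)
      {p | MemP0 G c p.1 ∧
            (∀ B ∈ p.1, PartOn B (p.2 B) ∧ NonCrossingPart (p.2 B) ∧ IrreducibleOn (p.2 B)) ∧
            (∀ B ∉ p.1, p.2 B = ∅)}
      {π | MemP G c π} := by
  classical
  refine ⟨?_, ?_, ?_⟩
  · -- MapsTo
    rintro ⟨σ, f⟩ ⟨h0, h1, h2⟩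
    dsimp only at h0 h1 h2
    exact union_memP h0 h1
  · -- InjOn
    rintro ⟨σ1, f1⟩ ⟨h0, h1, h2⟩ ⟨σ2, f2⟩ ⟨h0', h1', h2'⟩ heq
    dsimp only at h0 h1 h2 h0' h1' h2'
    have heq' : (⋃ B ∈ σ1, f1 B) = ⋃ B ∈ σ2, f2 B := heq
    have hπ : MemP G c (⋃ B ∈ σ1, f1 B) := union_memP h0 h1
    have hv1 : Valid G c (⋃ B ∈ σ1, f1 B) σ1 := valid_of_dom h0 h1
    have hv2 : Valid G c (⋃ B ∈ σ2, f2 B) σ2 := valid_of_dom h0' h1'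
    rw [← heq'] at hv2
    have hs : σ1 = σ2 := by
      rw [valid_eq_sigmaStar hπ hv1, valid_eq_sigmaStar hπ hv2]
    subst hs
    have hf : f1 = f2 := by
      funext B
      by_cases hB : B ∈ σ1
      · rw [res_eq h0 h1 hB, res_eq h0' h1' hB, heq']
      · rw [h2 B hB, h2' B hB]
    rw [hf]
  · -- SurjOn
    intro π hπ'
    have hπ : MemP G c π := hπ'
    refine ⟨(sigmaStar G c π,
      fun B => if B ∈ sigmaStar G c π then {A | A ∈ π ∧ A ⊆ B} else ∅), ⟨?_, ?_, ?_⟩, ?_⟩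
    · exact ⟨sStar_memP hπ, sStar_P0 hπ⟩
    · intro B hB
      obtain ⟨A1, hA1, rfl⟩ := hB
      have hBmem : ⋃₀ cls G c π A1 ∈ sigmaStar G c π := ⟨A1, hA1, rfl⟩
      dsimp only
      rw [if_pos hBmem, sStar_res hπ hA1]
      exact ⟨cls_partOn hπ hA1, cls_nc hπ hA1, sStar_irr hπ hA1⟩
    · intro B hB
      dsimp only
      exact if_neg hB
    · show (⋃ B ∈ sigmaStar G c π,
        (if B ∈ sigmaStar G c π then {A | A ∈ π ∧ A ⊆ B} else ∅)) = π
      ext A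
      constructor
      · intro hA
        obtain ⟨B, hB, hAf⟩ := mem_union_iff.mp hA
        rw [if_pos hB] at hAf
        exact hAf.1
      · intro hA
        have hBmem : ⋃₀ cls G c π A ∈ sigmaStar G c π := ⟨A, hA, rfl⟩
        refine mem_union_iff.mpr ⟨⋃₀ cls G c π A, hBmem, ?_⟩
        rw [if_pos hBmem]
        exact ⟨hA, Set.subset_sUnion_of_mem (cls_self hA)⟩
end

section
/- Fix a bigraph G, k ∈ ℕ, and c : [k] → V. Let π be a partition of [k] each of whose blocks is monochromatic under c, and let σ be the partition obtained from π by replacing, for each color v ∈ V, the restriction of π to c⁻¹(v) with its non-crossing envelope. Then π ∈ P̃(c,G) if and only if σ ∈ P(c,G). -/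
/-- `π ∈ P̃(c,G)`: as `P(c,G)` but crossings between blocks of the same color are allowed. -/
def MemPt {V : Type} {k : ℕ} (G : Bigraph V) (c : Fin k → V) (π : Set (Set (Fin k))) : Prop :=
  Setoid.IsPartition π ∧ Monochromatic c π ∧
  (∀ i1 j i2 : Fin k, i1 < j → j < i2 → SameBlock π i1 i2 → (c i1, c j) ∈ G.E1) ∧
  (∀ i1 j1 i2 j2 : Fin k, i1 < j1 → j1 < i2 → i2 < j2 →
    SameBlock π i1 i2 → SameBlock π j1 j2 → ¬ SameBlock π i1 j1 →
    ((c i2, c j1) ∈ G.E2 ∨ c i2 = c j1))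

def Coarser {k : ℕ} (π σ : Set (Set (Fin k))) : Prop :=
  ∀ A ∈ π, ∃ B ∈ σ, A ⊆ B

/-- No two distinct blocks of the same color cross. -/
def ColorwiseNonCrossing {V : Type} {k : ℕ} (c : Fin k → V) (σ : Set (Set (Fin k))) : Prop :=
  ∀ A ∈ σ, ∀ B ∈ σ, A ≠ B → (∃ i ∈ A, ∃ j ∈ B, c i = c j) → ¬ Crossing A B

/-- `σ` is the colorwise non-crossing envelope of `π`: the finest monochromatic
coarsening of `π` whose restriction to each color class is non-crossing (this is the
partition obtained by replacing, for each color `v`, the restriction `π|_{c⁻¹(v)}`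
by its non-crossing envelope). -/
def IsCwNCEnv {V : Type} {k : ℕ} (c : Fin k → V) (π σ : Set (Set (Fin k))) : Prop :=
  Setoid.IsPartition σ ∧ Coarser π σ ∧ Monochromatic c σ ∧ ColorwiseNonCrossing c σ ∧
  ∀ σ' : Set (Set (Fin k)), Setoid.IsPartition σ' → Coarser π σ' → Monochromatic c σ' →
    ColorwiseNonCrossing c σ' → Coarser σ σ'

namespace NC227

open Relation

variable {V : Type} {k : ℕ}

/-- One merging step: same color and the blocks are equal or cross. -/
def Step (c : Fin k → V) (π : Set (Set (Fin k))) (i j : Fin k) : Prop :=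
  c i = c j ∧ ∃ B ∈ π, ∃ B' ∈ π, i ∈ B ∧ j ∈ B' ∧ (B = B' ∨ Crossing B B')

/-- The generated equivalence relation. -/
abbrev Rel (c : Fin k → V) (π : Set (Set (Fin k))) : Fin k → Fin k → Prop :=
  EqvGen (Step c π)

lemma rel_color {c : Fin k → V} {π : Set (Set (Fin k))} {i j : Fin k}
    (h : Rel c π i j) : c i = c j := by
  induction h with
  | rel _ _ h => exact h.1
  | refl => rfl
  | symm _ _ _ ih => exact ih.symm
  | trans _ _ _ _ _ ih1 ih2 => exact ih1.trans ih2

lemma blocks_nonempty {π : Set (Set (Fin k))} (hπ : Setoid.IsPartition π)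
    {B : Set (Fin k)} (hB : B ∈ π) : ∃ b, b ∈ B := by
  by_contra h
  push_neg at h
  exact hπ.1 (by rwa [Set.eq_empty_iff_forall_notMem.2 h] at hB)

lemma block_unique {σ : Set (Set (Fin k))} (hσ : Setoid.IsPartition σ)
    {B B' : Set (Fin k)} (hB : B ∈ σ) (hB' : B' ∈ σ) {a : Fin k}
    (ha : a ∈ B) (ha' : a ∈ B') : B = B' := by
  obtain ⟨u, _, hu⟩ := hσ.2 a
  rw [hu B ⟨hB, ha⟩, hu B' ⟨hB', ha'⟩]

lemma step_of_block {c : Fin k → V} {π : Set (Set (Fin k))}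
    (hmono : Monochromatic c π) {B : Set (Fin k)} (hB : B ∈ π) {i j : Fin k}
    (hi : i ∈ B) (hj : j ∈ B) : Step c π i j :=
  ⟨hmono B hB i hi j hj, B, hB, B, hB, hi, hj, Or.inl rfl⟩

lemma crossingOne_mono {B B' A A' : Set (Fin k)} (h1 : B ⊆ A) (h2 : B' ⊆ A')
    (h : CrossingOne B B') : CrossingOne A A' := by
  obtain ⟨i, i', j, j', l1, l2, l3, m1, m2, m3, m4⟩ := h
  exact ⟨i, i', j, j', l1, l2, l3, h1 m1, h1 m2, h2 m3, h2 m4⟩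

lemma crossing_mono {B B' A A' : Set (Fin k)} (h1 : B ⊆ A) (h2 : B' ⊆ A')
    (h : Crossing B B') : Crossing A A' := by
  rcases h with h | h
  · exact Or.inl (crossingOne_mono h1 h2 h)
  · exact Or.inr (crossingOne_mono h2 h1 h)

lemma not_crossing_sep {B B' : Set (Fin k)} {p : Fin k}
    (h1 : ∀ x ∈ B, x < p) (h2 : ∀ x ∈ B', p < x) : ¬ Crossing B B' := by
  rintro (⟨i, i', j, j', l1, l2, l3, m1, m2, m3, m4⟩ |
          ⟨i, i', j, j', l1, l2, l3, m1, m2, m3, m4⟩)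
  · exact absurd (lt_trans (h2 i' m3) l2) (asymm (h1 j m2))
  · exact absurd (lt_trans (h2 i m1) l1) (asymm (h1 i' m3))

lemma not_crossing_sep_interval {B B' : Set (Fin k)} {m M : Fin k}
    (hin : ∀ q ∈ B, m < q ∧ q < M) (hout : ∀ q ∈ B', q < m ∨ M < q) :
    ¬ Crossing B B' := by
  rintro (⟨i, i', j, j', l1, l2, l3, m1, m2, m3, m4⟩ |
          ⟨i, i', j, j', l1, l2, l3, m1, m2, m3, m4⟩)
  · rcases hout i' m3 with h | h
    · exact absurd (lt_trans (hin i m1).1 l1) (asymm h)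
    · exact absurd (lt_trans l2 (hin j m2).2) (asymm h)
  · rcases hout i m1 with hi' | hi'
    · rcases hout j m2 with hj' | hj'
      · exact absurd (lt_trans (hin i' m3).1 l2) (asymm hj')
      · exact absurd (lt_trans l3 (hin j' m4).2) (asymm hj')
    · exact absurd (lt_trans hi' l1) (asymm (hin i' m3).2)

lemma crossing_of_traverse_aux {X Y : Set (Fin k)} {x1 x2 y x y1 y2 : Fin k}
    (hd : ∀ a ∈ X, a ∉ Y)
    (hx1 : x1 ∈ X) (hx2 : x2 ∈ X) (hy : y ∈ Y) (hx : x ∈ X)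
    (hy1 : y1 ∈ Y) (hy2 : y2 ∈ Y)
    (h1 : x1 < y) (h2 : y < x2) (h3 : y1 < x) (h4 : x < y2) (hxy : x < y) :
    Crossing X Y := by
  rcases lt_or_ge y y2 with h | h
  · rcases lt_trichotomy x2 y2 with h2' | h2' | h2'
    · exact Or.inl ⟨x, y, x2, y2, hxy, h2, h2', hx, hx2, hy, hy2⟩
    · exact absurd (h2' ▸ hy2) (hd x2 hx2)
    · exact Or.inr ⟨y1, x, y2, x2, h3, h4, h2', hy1, hy2, hx, hx2⟩
  · exact Or.inr ⟨y1, x, y2, x2, h3, h4, lt_of_le_of_lt h h2, hy1, hy2, hx, hx2⟩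

lemma crossing_of_traverse {X Y : Set (Fin k)} {x1 x2 y x y1 y2 : Fin k}
    (hd : ∀ a ∈ X, a ∉ Y)
    (hx1 : x1 ∈ X) (hx2 : x2 ∈ X) (hy : y ∈ Y) (hx : x ∈ X)
    (hy1 : y1 ∈ Y) (hy2 : y2 ∈ Y)
    (h1 : x1 < y) (h2 : y < x2) (h3 : y1 < x) (h4 : x < y2) :
    Crossing X Y := by
  rcases lt_trichotomy x y with h | h | h
  · exact crossing_of_traverse_aux hd hx1 hx2 hy hx hy1 hy2 h1 h2 h3 h4 h
  · exact absurd (h ▸ hy) (hd x hx)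
  · exact Or.symm (crossing_of_traverse_aux (fun a ha ha' => hd a ha' ha)
      hy1 hy2 hx hy hx1 hx2 h3 h4 h1 h2 h)

lemma side_classify {C : Set (Fin k)} {p : Fin k} (hp : p ∉ C)
    (h : ¬ ((∃ a ∈ C, a < p) ∧ (∃ b ∈ C, p < b))) :
    (∀ x ∈ C, x < p) ∨ (∀ x ∈ C, p < x) := by
  by_cases h1 : ∃ a ∈ C, a < p
  · left
    intro x hx
    rcases lt_trichotomy x p with h' | h' | h'
    · exact h'
    · exact absurd (h' ▸ hx) hp
    · exact absurd ⟨h1, x, hx, h'⟩ h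
  · right
    intro x hx
    rcases lt_trichotomy x p with h' | h' | h'
    · exact absurd ⟨x, hx, h'⟩ h1
    · exact absurd (h' ▸ hx) hp
    · exact h'

lemma side_classify2 {C : Set (Fin k)} {m M : Fin k} (hm : m ∉ C) (hM : M ∉ C)
    (h : ¬ ((∃ q ∈ C, m < q ∧ q < M) ∧ (∃ p ∈ C, p < m ∨ M < p))) :
    (∀ x ∈ C, m < x ∧ x < M) ∨ (∀ x ∈ C, x < m ∨ M < x) := by
  by_cases h1 : ∃ q ∈ C, m < q ∧ q < M
  · left
    intro x hx
    rcases lt_trichotomy x m with h' | h' | h'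
    · exact absurd ⟨h1, x, hx, Or.inl h'⟩ h
    · exact absurd (h' ▸ hx) hm
    rcases lt_trichotomy x M with h'' | h'' | h''
    · exact ⟨h', h''⟩
    · exact absurd (h'' ▸ hx) hM
    · exact absurd ⟨h1, x, hx, Or.inr h''⟩ h
  · right
    intro x hx
    rcases lt_trichotomy x m with h' | h' | h'
    · exact Or.inl h'
    · exact absurd (h' ▸ hx) hm
    rcases lt_trichotomy x M with h'' | h'' | h''
    · exact absurd ⟨x, hx, h', h''⟩ h1
    · exact absurd (h'' ▸ hx) hM
    · exact Or.inr h''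

lemma chain1 (c : Fin k → V) (π : Set (Set (Fin k))) (hπ : Setoid.IsPartition π)
    (hmono : Monochromatic c π) (i0 p : Fin k) (hp : ¬ Rel c π p i0) :
    ∀ i j, Rel c π i j → Rel c π i i0 →
      (∃ B ∈ π, (∃ b ∈ B, Rel c π b i0) ∧ (∃ a ∈ B, a < p) ∧ (∃ b' ∈ B, p < b')) ∨
      ((i < p) ↔ (j < p)) := by
  intro i j h
  induction h with
  | rel i j hs =>
    intro hii0
    have hjrel : Rel c π j i0 :=
      EqvGen.trans _ _ _ (EqvGen.symm _ _ (EqvGen.rel _ _ hs)) hii0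
    obtain ⟨hc, B, hB, B', hB', hiB, hjB', hor⟩ := hs
    have hpB : p ∉ B := fun hmem =>
      hp (EqvGen.trans _ _ _ (EqvGen.rel _ _ (step_of_block hmono hB hmem hiB)) hii0)
    have hpB' : p ∉ B' := fun hmem =>
      hp (EqvGen.trans _ _ _ (EqvGen.rel _ _ (step_of_block hmono hB' hmem hjB')) hjrel)
    by_cases hBl : (∃ a ∈ B, a < p) ∧ (∃ b' ∈ B, p < b')
    · exact Or.inl ⟨B, hB, ⟨i, hiB, hii0⟩, hBl.1, hBl.2⟩
    by_cases hB'l : (∃ a ∈ B', a < p) ∧ (∃ b' ∈ B', p < b')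
    · exact Or.inl ⟨B', hB', ⟨j, hjB', hjrel⟩, hB'l.1, hB'l.2⟩
    right
    rcases hor with rfl | hcr
    · rcases side_classify hpB hBl with hs1 | hs1
      · exact iff_of_true (hs1 i hiB) (hs1 j hjB')
      · exact iff_of_false (asymm (hs1 i hiB)) (asymm (hs1 j hjB'))
    · rcases side_classify hpB hBl with hs1 | hs1 <;>
        rcases side_classify hpB' hB'l with hs2 | hs2
      · exact iff_of_true (hs1 i hiB) (hs2 j hjB')
      · exact absurd hcr (not_crossing_sep hs1 hs2)
      · exact absurd (Or.symm hcr) (not_crossing_sep hs2 hs1)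
      · exact iff_of_false (asymm (hs1 i hiB)) (asymm (hs2 j hjB'))
  | refl i => exact fun _ => Or.inr Iff.rfl
  | symm i j h ih =>
    intro hji0
    have hij0 : Rel c π i i0 := EqvGen.trans _ _ _ h hji0
    rcases ih hij0 with hl | hr
    · exact Or.inl hl
    · exact Or.inr hr.symm
  | trans i j l h1 h2 ih1 ih2 =>
    intro hii0
    have hji0 : Rel c π j i0 := EqvGen.trans _ _ _ (EqvGen.symm _ _ h1) hii0
    rcases ih1 hii0 with hl | hr1
    · exact Or.inl hl
    rcases ih2 hji0 with hl | hr2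
    · exact Or.inl hl
    exact Or.inr (hr1.trans hr2)

lemma exists_block_traverses (c : Fin k → V) (π : Set (Set (Fin k)))
    (hπ : Setoid.IsPartition π) (hmono : Monochromatic c π) (i0 p i j : Fin k)
    (hp : ¬ Rel c π p i0) (hi : Rel c π i i0) (hj : Rel c π j i0)
    (h1 : i < p) (h2 : p < j) :
    ∃ B ∈ π, (∃ b ∈ B, Rel c π b i0) ∧ (∃ a ∈ B, a < p) ∧ (∃ b' ∈ B, p < b') := by
  rcases chain1 c π hπ hmono i0 p hp i j
      (EqvGen.trans _ _ _ hi (EqvGen.symm _ _ hj)) hi with h | h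
  · exact h
  · exact absurd (h.mp h1) (asymm h2)

lemma chain2 (c : Fin k → V) (π : Set (Set (Fin k))) (hπ : Setoid.IsPartition π)
    (hmono : Monochromatic c π) (i0 m M : Fin k)
    (hm : ¬ Rel c π m i0) (hM : ¬ Rel c π M i0) :
    ∀ i j, Rel c π i j → Rel c π i i0 →
      (∃ B ∈ π, (∃ b ∈ B, Rel c π b i0) ∧ (∃ q ∈ B, m < q ∧ q < M) ∧
        (∃ p ∈ B, p < m ∨ M < p)) ∨
      ((m < i ∧ i < M) ↔ (m < j ∧ j < M)) := by
  intro i j h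
  induction h with
  | rel i j hs =>
    intro hii0
    have hjrel : Rel c π j i0 :=
      EqvGen.trans _ _ _ (EqvGen.symm _ _ (EqvGen.rel _ _ hs)) hii0
    obtain ⟨hc, B, hB, B', hB', hiB, hjB', hor⟩ := hs
    have hmB : m ∉ B := fun hmem =>
      hm (EqvGen.trans _ _ _ (EqvGen.rel _ _ (step_of_block hmono hB hmem hiB)) hii0)
    have hMB : M ∉ B := fun hmem =>
      hM (EqvGen.trans _ _ _ (EqvGen.rel _ _ (step_of_block hmono hB hmem hiB)) hii0)
    have hmB' : m ∉ B' := fun hmem =>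
      hm (EqvGen.trans _ _ _ (EqvGen.rel _ _ (step_of_block hmono hB' hmem hjB')) hjrel)
    have hMB' : M ∉ B' := fun hmem =>
      hM (EqvGen.trans _ _ _ (EqvGen.rel _ _ (step_of_block hmono hB' hmem hjB')) hjrel)
    by_cases hBl : (∃ q ∈ B, m < q ∧ q < M) ∧ (∃ p ∈ B, p < m ∨ M < p)
    · exact Or.inl ⟨B, hB, ⟨i, hiB, hii0⟩, hBl.1, hBl.2⟩
    by_cases hB'l : (∃ q ∈ B', m < q ∧ q < M) ∧ (∃ p ∈ B', p < m ∨ M < p)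
    · exact Or.inl ⟨B', hB', ⟨j, hjB', hjrel⟩, hB'l.1, hB'l.2⟩
    right
    rcases hor with rfl | hcr
    · rcases side_classify2 hmB hMB hBl with hs1 | hs1
      · exact iff_of_true (hs1 i hiB) (hs1 j hjB')
      · refine iff_of_false ?_ ?_
        · rintro ⟨a, b⟩
          rcases hs1 i hiB with h' | h'
          · exact absurd a (asymm h')
          · exact absurd b (asymm h')
        · rintro ⟨a, b⟩
          rcases hs1 j hjB' with h' | h'
          · exact absurd a (asymm h')
          · exact absurd b (asymm h')
    · rcases side_classify2 hmB hMB hBl with hs1 | hs1 <;>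
        rcases side_classify2 hmB' hMB' hB'l with hs2 | hs2
      · exact iff_of_true (hs1 i hiB) (hs2 j hjB')
      · exact absurd hcr (not_crossing_sep_interval hs1 hs2)
      · exact absurd (Or.symm hcr) (not_crossing_sep_interval hs2 hs1)
      · refine iff_of_false ?_ ?_
        · rintro ⟨a, b⟩
          rcases hs1 i hiB with h' | h'
          · exact absurd a (asymm h')
          · exact absurd b (asymm h')
        · rintro ⟨a, b⟩
          rcases hs2 j hjB' with h' | h'
          · exact absurd a (asymm h')
          · exact absurd b (asymm h')
  | refl i => exact fun _ => Or.inr Iff.rfl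
  | symm i j h ih =>
    intro hji0
    have hij0 : Rel c π i i0 := EqvGen.trans _ _ _ h hji0
    rcases ih hij0 with hl | hr
    · exact Or.inl hl
    · exact Or.inr hr.symm
  | trans i j l h1 h2 ih1 ih2 =>
    intro hii0
    have hji0 : Rel c π j i0 := EqvGen.trans _ _ _ (EqvGen.symm _ _ h1) hii0
    rcases ih1 hii0 with hl | hr1
    · exact Or.inl hl
    rcases ih2 hji0 with hl | hr2
    · exact Or.inl hl
    exact Or.inr (hr1.trans hr2)

lemma lemB (c : Fin k → V) (π : Set (Set (Fin k))) (hπ : Setoid.IsPartition π)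
    (hmono : Monochromatic c π) (i0 : Fin k) (C : Set (Fin k))
    (hd : ∀ x, Rel c π x i0 → x ∉ C)
    (hC1 : ∃ c' ∈ C, ∃ x1, Rel c π x1 i0 ∧ ∃ x2, Rel c π x2 i0 ∧ x1 < c' ∧ c' < x2)
    (hC2 : ∃ x, Rel c π x i0 ∧ ∃ c1 ∈ C, ∃ c2 ∈ C, c1 < x ∧ x < c2) :
    ∃ B ∈ π, (∃ b ∈ B, Rel c π b i0) ∧ Crossing B C := by
  obtain ⟨c', hc'C, x1, hx1, x2, hx2, hlt1, hlt2⟩ := hC1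
  have hpc : ¬ Rel c π c' i0 := fun h => hd c' h hc'C
  obtain ⟨B, hB, ⟨b, hbB, hbrel⟩, ⟨b1, hb1B, hb1lt⟩, ⟨b2, hb2B, hb2lt⟩⟩ :=
    exists_block_traverses c π hπ hmono i0 c' x1 x2 hpc hx1 hx2 hlt1 hlt2
  have hBrel : ∀ x ∈ B, Rel c π x i0 := fun x hx =>
    EqvGen.trans _ _ _ (EqvGen.rel _ _ (step_of_block hmono hB hx hbB)) hbrel
  have hdisjB : ∀ a ∈ B, a ∉ C := fun a ha => hd a (hBrel a ha)
  obtain ⟨m, hmC, hmmin⟩ := Set.exists_min_image C id (Set.toFinite C) ⟨c', hc'C⟩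
  obtain ⟨M, hMC, hMmax⟩ := Set.exists_max_image C id (Set.toFinite C) ⟨c', hc'C⟩
  by_cases hcase : ∃ q ∈ B, m < q ∧ q < M
  · obtain ⟨q, hqB, hq1, hq2⟩ := hcase
    exact ⟨B, hB, ⟨b, hbB, hbrel⟩,
      crossing_of_traverse hdisjB hb1B hb2B hc'C hqB hmC hMC hb1lt hb2lt hq1 hq2⟩
  · obtain ⟨x, hxrel, c1, hc1, c2, hc2, hlt3, hlt4⟩ := hC2
    have hxin : m < x ∧ x < M :=
      ⟨lt_of_le_of_lt (hmmin c1 hc1) hlt3, lt_of_lt_of_le hlt4 (hMmax c2 hc2)⟩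
    have hbout : ¬ (m < b ∧ b < M) := fun hin => hcase ⟨b, hbB, hin⟩
    have hm' : ¬ Rel c π m i0 := fun h => hd m h hmC
    have hM' : ¬ Rel c π M i0 := fun h => hd M h hMC
    rcases chain2 c π hπ hmono i0 m M hm' hM' x b
        (EqvGen.trans _ _ _ hxrel (EqvGen.symm _ _ hbrel)) hxrel with
      ⟨D, hD, ⟨d, hdD, hdrel⟩, ⟨q, hqD, hq1, hq2⟩, ⟨p, hpD, hp⟩⟩ | hiff
    · have hDrel : ∀ z ∈ D, Rel c π z i0 := fun z hz =>
        EqvGen.trans _ _ _ (EqvGen.rel _ _ (step_of_block hmono hD hz hdD)) hdrel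
      have hdisjD : ∀ a ∈ D, a ∉ C := fun a ha => hd a (hDrel a ha)
      refine ⟨D, hD, ⟨d, hdD, hdrel⟩, ?_⟩
      rcases hp with hp | hp
      · exact crossing_of_traverse hdisjD hpD hqD hmC hqD hmC hMC hp hq1 hq1 hq2
      · exact crossing_of_traverse hdisjD hqD hpD hMC hqD hmC hMC hq2 hp hq1 hq2
    · exact absurd (hiff.mp hxin) hbout

lemma key (c : Fin k → V) (π : Set (Set (Fin k))) (hπ : Setoid.IsPartition π)
    (hmono : Monochromatic c π) (x0 y0 : Fin k) (hxy : ¬ Rel c π x0 y0)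
    (hcr : Crossing {x | Rel c π x x0} {x | Rel c π x y0}) :
    ∃ B ∈ π, ∃ C ∈ π, (∃ b ∈ B, Rel c π b x0) ∧ (∃ e ∈ C, Rel c π e y0) ∧
      Crossing B C := by
  have hdXY : ∀ x, Rel c π x x0 → x ∉ {x | Rel c π x y0} := fun x h hy =>
    hxy (EqvGen.trans _ _ _ (EqvGen.symm _ _ h) hy)
  obtain ⟨c', hc', x1, hx1, x2, hx2, l1, l2, x, hx, y1, hy1, y2, hy2, l3, l4⟩ :
      ∃ c', Rel c π c' y0 ∧ ∃ x1, Rel c π x1 x0 ∧ ∃ x2, Rel c π x2 x0 ∧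
        x1 < c' ∧ c' < x2 ∧ ∃ x, Rel c π x x0 ∧ ∃ y1, Rel c π y1 y0 ∧
        ∃ y2, Rel c π y2 y0 ∧ y1 < x ∧ x < y2 := by
    rcases hcr with ⟨i, i', j, j', h1, h2, h3, hiX, hjX, hi'Y, hj'Y⟩ |
                    ⟨i, i', j, j', h1, h2, h3, hiY, hjY, hi'X, hj'X⟩
    · exact ⟨i', hi'Y, i, hiX, j, hjX, h1, h2, j, hjX, i', hi'Y, j', hj'Y, h2, h3⟩
    · exact ⟨j, hjY, i', hi'X, j', hj'X, h2, h3, i', hi'X, i, hiY, j, hjY, h1, h2⟩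
  obtain ⟨B, hB, ⟨b0, hb0B, hb0rel⟩, hBcr⟩ :=
    lemB c π hπ hmono x0 {x | Rel c π x y0} hdXY
      ⟨c', hc', x1, hx1, x2, hx2, l1, l2⟩
      ⟨x, hx, y1, hy1, y2, hy2, l3, l4⟩
  have hBsub : ∀ z ∈ B, Rel c π z x0 := fun z hz =>
    EqvGen.trans _ _ _ (EqvGen.rel _ _ (step_of_block hmono hB hz hb0B)) hb0rel
  have hdYB : ∀ x, Rel c π x y0 → x ∉ B := fun x h hxB =>
    hxy (EqvGen.trans _ _ _ (EqvGen.symm _ _ (hBsub x hxB)) h)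
  obtain ⟨β, hβB, yy1, hyy1, yy2, hyy2, m1, m2, xx, hxxY, bb1, hbb1, bb2, hbb2, m3, m4⟩ :
      ∃ β, β ∈ B ∧ ∃ yy1, Rel c π yy1 y0 ∧ ∃ yy2, Rel c π yy2 y0 ∧
        yy1 < β ∧ β < yy2 ∧ ∃ xx, Rel c π xx y0 ∧ ∃ bb1, bb1 ∈ B ∧
        ∃ bb2, bb2 ∈ B ∧ bb1 < xx ∧ xx < bb2 := by
    rcases hBcr with ⟨i, i', j, j', h1, h2, h3, hiB, hjB, hi'Y, hj'Y⟩ |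
                     ⟨i, i', j, j', h1, h2, h3, hiY, hjY, hi'B, hj'B⟩
    · exact ⟨j, hjB, i', hi'Y, j', hj'Y, h2, h3, i', hi'Y, i, hiB, j, hjB, h1, h2⟩
    · exact ⟨i', hi'B, i, hiY, j, hjY, h1, h2, j, hjY, i', hi'B, j', hj'B, h2, h3⟩
  obtain ⟨Cb, hCb, hCelt, hCcr⟩ :=
    lemB c π hπ hmono y0 B hdYB
      ⟨β, hβB, yy1, hyy1, yy2, hyy2, m1, m2⟩
      ⟨xx, hxxY, bb1, hbb1, bb2, hbb2, m3, m4⟩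
  exact ⟨B, hB, Cb, hCb, ⟨b0, hb0B, hb0rel⟩, hCelt, Or.symm hCcr⟩

/-- The setoid generated by `Step`. -/
def relSetoid (c : Fin k → V) (π : Set (Set (Fin k))) : Setoid (Fin k) :=
  EqvGen.setoid (Step c π)

lemma relSetoid_iff {c : Fin k → V} {π : Set (Set (Fin k))} {i j : Fin k} :
    relSetoid c π i j ↔ Rel c π i j := Iff.rfl

lemma classes_coarser (c : Fin k → V) (π : Set (Set (Fin k)))
    (hπ : Setoid.IsPartition π) (hmono : Monochromatic c π) :
    Coarser π (relSetoid c π).classes := by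
  intro A hA
  obtain ⟨a, ha⟩ := blocks_nonempty hπ hA
  refine ⟨{x | relSetoid c π x a}, Setoid.mem_classes _ a, ?_⟩
  intro x hx
  exact EqvGen.rel _ _ (step_of_block hmono hA hx ha)

lemma classes_mono (c : Fin k → V) (π : Set (Set (Fin k))) :
    Monochromatic c (relSetoid c π).classes := by
  rintro B ⟨y, rfl⟩ i hi j hj
  exact (rel_color (c := c) (π := π) hi).trans (rel_color (c := c) (π := π) hj).symm

lemma classes_cwnc (c : Fin k → V) (π : Set (Set (Fin k)))
    (hπ : Setoid.IsPartition π) (hmono : Monochromatic c π) :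
    ColorwiseNonCrossing c (relSetoid c π).classes := by
  rintro A ⟨a, rfl⟩ B ⟨b, rfl⟩ hne ⟨i, hi, j, hj, hcij⟩ hcr
  have hab : ¬ Rel c π a b := by
    intro h
    apply hne
    ext x
    constructor
    · intro hx
      exact EqvGen.trans _ _ _ hx h
    · intro hx
      exact EqvGen.trans _ _ _ hx (EqvGen.symm _ _ h)
  obtain ⟨P, hP, Q, hQ, ⟨p, hpP, hprel⟩, ⟨q, hqQ, hqrel⟩, hPQ⟩ :=
    key c π hπ hmono a b hab hcr
  have h1 : c p = c i := rel_color (EqvGen.trans _ _ _ hprel (EqvGen.symm _ _ hi))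
  have h2 : c q = c j := rel_color (EqvGen.trans _ _ _ hqrel (EqvGen.symm _ _ hj))
  have hpq : c p = c q := h1.trans (hcij.trans h2.symm)
  have hstep : Rel c π p q := EqvGen.rel _ _ ⟨hpq, P, hP, Q, hQ, hpP, hqQ, Or.inr hPQ⟩
  exact hab (EqvGen.trans _ _ _ (EqvGen.symm _ _ hprel)
    (EqvGen.trans _ _ _ hstep hqrel))

lemma rel_sameblock (c : Fin k → V) (π σ : Set (Set (Fin k)))
    (hσpart : Setoid.IsPartition σ) (hco : Coarser π σ)
    (hσnc : ColorwiseNonCrossing c σ) :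
    ∀ i j, Rel c π i j → SameBlock σ i j := by
  intro i j h
  induction h with
  | rel i j hs =>
    obtain ⟨hc, B, hB, B', hB', hiB, hjB', hor⟩ := hs
    obtain ⟨S, hS, hBS⟩ := hco B hB
    obtain ⟨S', hS', hBS'⟩ := hco B' hB'
    rcases hor with rfl | hcr
    · exact ⟨S, hS, hBS hiB, hBS hjB'⟩
    · by_cases hSS : S = S'
      · exact ⟨S, hS, hBS hiB, by rw [hSS]; exact hBS' hjB'⟩
      · exact absurd (crossing_mono hBS hBS' hcr)
          (hσnc S hS S' hS' hSS ⟨i, hBS hiB, j, hBS' hjB', hc⟩)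
  | refl i =>
    obtain ⟨S, ⟨hS, hiS⟩, _⟩ := hσpart.2 i
    exact ⟨S, hS, hiS, hiS⟩
  | symm i j h ih =>
    obtain ⟨S, hS, h1, h2⟩ := ih
    exact ⟨S, hS, h2, h1⟩
  | trans i j l h1 h2 ih1 ih2 =>
    obtain ⟨S, hS, hiS, hjS⟩ := ih1
    obtain ⟨S', hS', hjS', hlS'⟩ := ih2
    have hSeq := block_unique hσpart hS hS' hjS hjS'
    exact ⟨S, hS, hiS, by rw [hSeq]; exact hlS'⟩

end NC227

open Relation

/-- Lemma 2.27: for a partition `π` with monochromatic blocks and `σ` its colorwise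
non-crossing envelope, `π ∈ P̃(c,G)` if and only if `σ ∈ P(c,G)`. -/
theorem mem_Pt_iff_cwEnv_mem_P {V : Type} {k : ℕ} (G : Bigraph V) (c : Fin k → V)
    (π σ : Set (Set (Fin k))) (hπ : Setoid.IsPartition π) (hmono : Monochromatic c π)
    (hσ : IsCwNCEnv c π σ) :
    MemPt G c π ↔ MemP G c σ := by
  obtain ⟨hσpart, hσco, hσmono, hσnc, hσmin⟩ := hσ
  have hsbc : ∀ i j : Fin k, SameBlock π i j → SameBlock σ i j := by
    rintro i j ⟨B, hB, hi, hj⟩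
    obtain ⟨S, hS, hBS⟩ := hσco B hB
    exact ⟨S, hS, hBS hi, hBS hj⟩
  constructor
  · intro hPt
    have hmin : Coarser σ (NC227.relSetoid c π).classes :=
      hσmin _ (Setoid.isPartition_classes _) (NC227.classes_coarser c π hπ hmono)
        (NC227.classes_mono c π) (NC227.classes_cwnc c π hπ hmono)
    have hblock_eq : ∀ A ∈ σ, ∀ a ∈ A, A = {x | NC227.Rel c π x a} := by
      intro A hA a haA
      apply Set.Subset.antisymm
      · obtain ⟨K, hK, hAK⟩ := hmin A hA
        obtain ⟨y, rfl⟩ := hK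
        have hay : NC227.Rel c π a y := hAK haA
        intro x hx
        exact EqvGen.trans _ _ _ (hAK hx) (EqvGen.symm _ _ hay)
      · intro x hx
        obtain ⟨S, hS, hxS, haS⟩ := NC227.rel_sameblock c π σ hσpart hσco hσnc x a hx
        have hSA : S = A := NC227.block_unique hσpart hS hA haS haA
        rw [← hSA]; exact hxS
    refine ⟨hσpart, hσmono, ?_, ?_⟩
    · rintro i1 j i2 h1 h2 ⟨A, hA, hi1A, hi2A⟩
      by_cases hjA : j ∈ A
      · have hcj : c j = c i1 := hσmono A hA j hjA i1 hi1A
        rw [hcj]; exact G.refl1 _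
      · have hAeq := hblock_eq A hA i1 hi1A
        have hi2rel : NC227.Rel c π i2 i1 := by rw [hAeq] at hi2A; exact hi2A
        have hjrel : ¬ NC227.Rel c π j i1 := by rw [hAeq] at hjA; exact hjA
        obtain ⟨B, hB, ⟨b, hbB, hbrel⟩, ⟨a1, ha1B, ha1lt⟩, ⟨a2, ha2B, ha2lt⟩⟩ :=
          NC227.exists_block_traverses c π hπ hmono i1 j i1 i2 hjrel
            (EqvGen.refl i1) hi2rel h1 h2
        have hE1 := hPt.2.2.1 a1 j a2 ha1lt ha2lt ⟨B, hB, ha1B, ha2B⟩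
        have hca : c a1 = c i1 := NC227.rel_color
          (EqvGen.trans _ _ _ (EqvGen.rel _ _ (NC227.step_of_block hmono hB ha1B hbB)) hbrel)
        rw [← hca]; exact hE1
    · rintro i1 j1 i2 j2 h1 h2 h3 ⟨A, hA, hi1A, hi2A⟩ ⟨B, hB, hj1B, hj2B⟩ hnot
      have hABne : A ≠ B := fun h => hnot ⟨A, hA, hi1A, by rw [h]; exact hj1B⟩
      have hcolor : c i2 ≠ c j1 := by
        intro hcc
        exact hσnc A hA B hB hABne ⟨i2, hi2A, j1, hj1B, hcc⟩
          (Or.inl ⟨i1, j1, i2, j2, h1, h2, h3, hi1A, hi2A, hj1B, hj2B⟩)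
      have hAeq := hblock_eq A hA i1 hi1A
      have hBeq := hblock_eq B hB j1 hj1B
      have hdisj : ∀ x, x ∈ A → x ∈ B → False := fun x hxA hxB =>
        hABne (NC227.block_unique hσpart hA hB hxA hxB)
      have hx0y0 : ¬ NC227.Rel c π i1 j1 := fun h =>
        hdisj i1 hi1A (by rw [hBeq]; exact h)
      have hcr : Crossing {x | NC227.Rel c π x i1} {x | NC227.Rel c π x j1} := by
        rw [← hAeq, ← hBeq]
        exact Or.inl ⟨i1, j1, i2, j2, h1, h2, h3, hi1A, hi2A, hj1B, hj2B⟩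
      obtain ⟨P, hP, Q, hQ, ⟨p, hpP, hprel⟩, ⟨q, hqQ, hqrel⟩, hPQ⟩ :=
        NC227.key c π hπ hmono i1 j1 hx0y0 hcr
      have hPcol : ∀ z ∈ P, c z = c i1 := fun z hz => NC227.rel_color
        (EqvGen.trans _ _ _ (EqvGen.rel _ _ (NC227.step_of_block hmono hP hz hpP)) hprel)
      have hQcol : ∀ z ∈ Q, c z = c j1 := fun z hz => NC227.rel_color
        (EqvGen.trans _ _ _ (EqvGen.rel _ _ (NC227.step_of_block hmono hQ hz hqQ)) hqrel)
      have hci12 : c i1 = c i2 := hσmono A hA i1 hi1A i2 hi2A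
      rcases hPQ with ⟨a1, b1, a2, b2, l1, l2, l3, ha1, ha2, hb1, hb2⟩ |
                      ⟨b1, a1, b2, a2, l1, l2, l3, hb1, hb2, ha1, ha2⟩
      · have hnsb : ¬ SameBlock π a1 b1 := by
          rintro ⟨R, hR, haR, hbR⟩
          exact hcolor (by
            rw [← hci12, ← hPcol a1 ha1, hmono R hR a1 haR b1 hbR, hQcol b1 hb1])
        have e1 : c a2 = c i2 := (hPcol a2 ha2).trans hci12
        have e2 : c b1 = c j1 := hQcol b1 hb1
        rcases hPt.2.2.2 a1 b1 a2 b2 l1 l2 l3 ⟨P, hP, ha1, ha2⟩ ⟨Q, hQ, hb1, hb2⟩ hnsb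
          with h | h
        · rw [e1, e2] at h; exact h
        · exact absurd (e1.symm.trans (h.trans e2)) hcolor
      · have hnsb : ¬ SameBlock π b1 a1 := by
          rintro ⟨R, hR, hbR, haR⟩
          exact hcolor (by
            rw [← hci12, ← hPcol a1 ha1, hmono R hR a1 haR b1 hbR, hQcol b1 hb1])
        have e1 : c b2 = c j1 := hQcol b2 hb2
        have e2 : c a1 = c i2 := (hPcol a1 ha1).trans hci12
        rcases hPt.2.2.2 b1 a1 b2 a2 l1 l2 l3 ⟨Q, hQ, hb1, hb2⟩ ⟨P, hP, ha1, ha2⟩ hnsb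
          with h | h
        · rw [e1, e2] at h
          exact G.symm2 _ _ h
        · exact absurd (e2.symm.trans (h.symm.trans e1)) hcolor
  · intro hP
    refine ⟨hπ, hmono, ?_, ?_⟩
    · intro i1 j i2 h1 h2 hsb
      exact hP.2.2.1 i1 j i2 h1 h2 (hsbc _ _ hsb)
    · intro i1 j1 i2 j2 h1 h2 h3 hs1 hs2 hns
      by_cases h : SameBlock σ i1 j1
      · right
        obtain ⟨S, hS, hi1, hj1⟩ := h
        obtain ⟨T, hT, hi1T, hi2T⟩ := hs1
        have e2 : c i1 = c i2 := hmono T hT i1 hi1T i2 hi2T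
        exact e2.symm.trans (hσmono S hS i1 hi1 j1 hj1)
      · exact Or.inl (hP.2.2.2 i1 j1 i2 j2 h1 h2 h3 (hsbc _ _ hs1) (hsbc _ _ hs2) h)
end
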